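/- arXiv:1406.3408 — 7 statements merged into one kernel-verified Lean document; each statement's English description precedes it below -/
import Mathlib

section
/- Let 0 < R ≤ ∞, set I = [0,R), and let f : I → [0,∞). Let G be a tree with at least 3 vertices. Then the following are equivalent: (1) f_G[A] ∈ P_G for every A ∈ P_G(I); (2) f_T[A] ∈ P_T for every tree T and every A ∈ P_T(I); (3) f_{A_3}[A] ∈ P_{A_3} for every A ∈ P_{A_3}(I), where A_3 is the path graph on 3 vertices; (4) f satisfies f(√(xy))² ≤ f(x)·f(y) for all x,y ∈ I, and f is superadditive on I, i.e. f(x+y) ≥ f(x) + f(y) whenever x, y, x+y ∈ I. -/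
open Matrix
open scoped Classical ENNReal

/-- `A` has zeros according to the graph `G`: off-diagonal entries at non-edges vanish. -/
def sparsePattern {n : ℕ} (G : SimpleGraph (Fin n)) (A : Matrix (Fin n) (Fin n) ℝ) : Prop :=
  ∀ i j, i ≠ j → ¬ G.Adj i j → A i j = 0

/-- `A ∈ P_G(I)`: `A` is positive semidefinite, has entries in `I`,
and has zeros according to `G`. -/
def memPG {n : ℕ} (G : SimpleGraph (Fin n)) (I : Set ℝ) (A : Matrix (Fin n) (Fin n) ℝ) : Prop :=
  A.PosSemidef ∧ (∀ i j, A i j ∈ I) ∧ sparsePattern G A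

/-- The entrywise application `f_G[A]` of `f` to `A` according to the graph `G`. -/
noncomputable def applyG {n : ℕ} (G : SimpleGraph (Fin n)) (f : ℝ → ℝ)
    (A : Matrix (Fin n) (Fin n) ℝ) : Matrix (Fin n) (Fin n) ℝ :=
  Matrix.of fun i j => if i = j ∨ G.Adj i j then f (A i j) else 0

/-!
A positive semidefinite matrix `A` whose pattern is a forest splits along the edges: eliminating a
leaf `v` with neighbour `u` (a Schur complement) removes a rank-one block supported on `{u, v}` and
leaves a positive semidefinite matrix whose pattern has lost the edge `uv`. Hence `A` is a sum of
positive semidefinite blocks `!![c i j, A i j; A i j, c j i]` on the edges with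
`c i j * c j i = A i j ^ 2`, plus a nonnegative diagonal. Applying `f` keeps each block positive
semidefinite because `f (A i j) ^ 2 = f (√(c i j * c j i)) ^ 2 ≤ f (c i j) * f (c j i)`, and
superadditivity together with `0 ≤ f` keeps the diagonal above `∑ j, f (c i j)`.

Conversely, a tree on at least three vertices contains an induced path `i - j - k`, and the two
conditions on `f` are read off from `f` applied to rank-one test matrices supported on it.
-/

open SimpleGraph

theorem quadratic_form_nonneg_of_sq_le_mul {a b d : ℝ} (ha : 0 ≤ a) (hd : 0 ≤ d)
    (hb : b ^ 2 ≤ a * d) (x y : ℝ) : 0 ≤ a * x ^ 2 + 2 * b * x * y + d * y ^ 2 := by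
  rcases ha.eq_or_lt with rfl | ha
  · obtain rfl : b = 0 := by nlinarith
    nlinarith
  · have : 0 ≤ a * (a * x ^ 2 + 2 * b * x * y + d * y ^ 2) := by
      nlinarith [sq_nonneg (a * x + b * y), sq_nonneg y]
    exact nonneg_of_mul_nonneg_right this ha

namespace Matrix

variable {V : Type*} {A : Matrix V V ℝ}

theorem PosSemidef.apply_comm (hA : A.PosSemidef) (i j : V) : A i j = A j i := by
  simpa using (hA.isHermitian.apply i j).symm

/-- The Schur complement of the entry `A v v`, padded with a zero row and column at `v`.
If `A v v = 0` it is `A` itself (`0⁻¹ = 0`); for positive semidefinite `A` row `v` then vanishes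
anyway. -/
noncomputable def schurComplementAt (A : Matrix V V ℝ) (v : V) : Matrix V V ℝ :=
  A - (A v v)⁻¹ • vecMulVec (A v) (A v)

theorem schurComplementAt_apply (A : Matrix V V ℝ) (v i j : V) :
    A.schurComplementAt v i j = A i j - A v i * A v j / A v v := by
  simp [schurComplementAt, vecMulVec_apply]
  ring

variable [Fintype V]

namespace PosSemidef

theorem sq_mulVec_apply_le (hA : A.PosSemidef) (x : V → ℝ) (v : V) :
    (A *ᵥ x) v ^ 2 ≤ A v v * (x ⬝ᵥ A *ᵥ x) := by
  have hquad : ∀ t : ℝ, 0 ≤ A v v * (t * t) + 2 * (A *ᵥ x) v * t + x ⬝ᵥ A *ᵥ x := by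
    intro t
    have h := hA.dotProduct_mulVec_nonneg (x + t • Pi.single v 1)
    have hsymm : x ⬝ᵥ A.col v = (A *ᵥ x) v := by
      simp only [mulVec, dotProduct, col_apply, hA.apply_comm _ v, mul_comm]
    simp only [star_trivial, mulVec_add, mulVec_smul, mulVec_single_one, dotProduct_add,
      add_dotProduct, dotProduct_smul, smul_dotProduct, single_one_dotProduct, hsymm,
      col_apply, smul_eq_mul] at h
    linarith
  have := discrim_le_zero hquad
  rw [discrim] at this
  linarith

theorem sq_apply_le_mul (hA : A.PosSemidef) (i j : V) : A i j ^ 2 ≤ A i i * A j j := by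
  simpa [mulVec_single_one] using hA.sq_mulVec_apply_le (Pi.single j 1) i

theorem apply_eq_zero_of_diag_eq_zero (hA : A.PosSemidef) {v : V} (hv : A v v = 0) (j : V) :
    A v j = 0 := by
  have := hA.sq_apply_le_mul v j
  rw [hv, zero_mul] at this
  exact pow_eq_zero_iff two_ne_zero |>.mp (le_antisymm this (sq_nonneg _))

theorem schurComplementAt (hA : A.PosSemidef) (v : V) : (A.schurComplementAt v).PosSemidef := by
  refine .of_dotProduct_mulVec_nonneg ?_ fun x => ?_
  · refine IsHermitian.ext fun i j => ?_
    simp only [star_trivial, schurComplementAt_apply, hA.apply_comm j i, mul_comm]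
  · have hform : star x ⬝ᵥ A.schurComplementAt v *ᵥ x
        = x ⬝ᵥ A *ᵥ x - (A v v)⁻¹ * (A *ᵥ x) v ^ 2 := by
      simp only [Matrix.schurComplementAt, star_trivial, sub_mulVec, smul_mulVec,
        vecMulVec_mulVec, dotProduct_sub, dotProduct_smul, smul_eq_mul, op_smul_eq_mul,
        dotProduct_comm x (A v)]
      rw [sq]
      rfl
    rw [hform, sub_nonneg]
    rcases eq_or_ne (A v v) 0 with hv | hv
    · simpa [hv] using hA.dotProduct_mulVec_nonneg x
    · rw [inv_mul_le_iff₀ (hA.diag_nonneg.lt_of_ne' hv)]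
      exact hA.sq_mulVec_apply_le x v

theorem schurComplementAt_apply_self_left (hA : A.PosSemidef) (v j : V) :
    A.schurComplementAt v v j = 0 := by
  rw [schurComplementAt_apply]
  rcases eq_or_ne (A v v) 0 with hv | hv
  · simp [hA.apply_eq_zero_of_diag_eq_zero hv]
  · field_simp
    ring

end PosSemidef

theorem posSemidef_of_sq_le_mul_of_sum_le {P : Matrix V V ℝ}
    (hP : P.IsHermitian) (p : V → V → ℝ) (hp : ∀ i j, 0 ≤ p i j)
    (hoff : ∀ i j, i ≠ j → P i j ^ 2 ≤ p i j * p j i) (hdiag : ∀ i, ∑ j, p i j ≤ P i i) :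
    P.PosSemidef := by
  refine .of_dotProduct_mulVec_nonneg hP fun x => ?_
  -- `k i j + k j i` is the form of the block `!![p i j, P i j; P i j, p j i]` at `(x i, x j)`.
  set k : V → V → ℝ := fun i j => p i j * x i ^ 2 + if i = j then 0 else x i * P i j * x j
  have hform : star x ⬝ᵥ P *ᵥ x = ∑ i, (P i i - ∑ j, p i j) * x i ^ 2 + ∑ i, ∑ j, k i j := by
    simp only [star_trivial, dotProduct, mulVec, Finset.mul_sum, ← Finset.sum_add_distrib]
    refine Finset.sum_congr rfl fun i _ => ?_
    have hsplit : ∀ j, x i * (P i j * x j)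
        = (if i = j then P i i * x i ^ 2 else 0) + (if i = j then 0 else x i * P i j * x j) := by
      intro j
      split_ifs with h
      · subst h; ring
      · ring
    simp only [k, hsplit, Finset.sum_add_distrib, Finset.sum_ite_eq, Finset.mem_univ, if_true,
      ← Finset.sum_mul]
    ring
  have hpair : ∀ i j, 0 ≤ k i j + k j i := by
    intro i j
    rcases eq_or_ne i j with rfl | hij
    · simp only [k, if_true]
      nlinarith [hp i i, sq_nonneg (x i)]
    · have hPji : P j i = P i j := by simpa using hP.apply i j
      simp only [k, if_neg hij, if_neg hij.symm, hPji]
      nlinarith [quadratic_form_nonneg_of_sq_le_mul (hp i j) (hp j i) (hoff i j hij) (x i) (x j)]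
  have hk : 0 ≤ ∑ i, ∑ j, k i j := by
    have hsymm : 2 * ∑ i, ∑ j, k i j = ∑ i, ∑ j, (k i j + k j i) := by
      rw [two_mul]
      nth_rw 2 [Finset.sum_comm]
      simp only [← Finset.sum_add_distrib]
    have := Finset.sum_nonneg fun i (_ : i ∈ Finset.univ) =>
      Finset.sum_nonneg fun j (_ : j ∈ Finset.univ) => hpair i j
    linarith
  rw [hform]
  exact add_nonneg (Finset.sum_nonneg fun i _ =>
    mul_nonneg (sub_nonneg.2 (hdiag i)) (sq_nonneg _)) hk

end Matrix

namespace SimpleGraph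

variable {V : Type*}

theorem IsAcyclic.exists_adj_forall_adj_eq [Finite V] {G : SimpleGraph V}
    (hG : G.IsAcyclic) {a b : V} (hab : G.Adj a b) :
    ∃ v u, G.Adj v u ∧ ∀ w, G.Adj v w → w = u := by
  have : Nonempty V := ⟨a⟩
  obtain ⟨v, _, p, hp, hmax⟩ := Walk.exists_isPath_forall_isPath_length_le_length G
  have hnil : ¬p.Nil := fun hnil => by
    simpa [Walk.length_eq_zero_iff.mpr hnil] using hmax _ _ _ (Path.singleton hab).2
  refine ⟨v, p.snd, p.adj_snd hnil, fun w hvw => hG.eq_snd_of_adj_start hp hvw ?_⟩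
  by_contra hw
  simpa using hmax _ _ _ (hp.cons (h := hvw.symm) hw)

theorem IsTree.exists_adj_adj_not_adj [Fintype V] {G : SimpleGraph V}
    (hG : G.IsTree) (hV : 3 ≤ Fintype.card V) :
    ∃ i j k, G.Adj i j ∧ G.Adj j k ∧ i ≠ k ∧ ¬ G.Adj i k := by
  obtain ⟨j, hj⟩ : ∃ j, 1 < G.degree j := by
    by_contra! h
    have hsum : ∑ v, G.degree v ≤ ∑ _v : V, 1 := Finset.sum_le_sum fun v _ => h v
    rw [G.sum_degrees_eq_twice_card_edges] at hsum
    have := hG.card_edgeFinset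
    simp only [Finset.sum_const, Finset.card_univ, smul_eq_mul, mul_one] at hsum
    omega
  rw [← card_neighborFinset_eq_degree] at hj
  obtain ⟨i, hi, k, hk, hik⟩ := Finset.one_lt_card.mp hj
  rw [mem_neighborFinset] at hi hk
  exact ⟨i, j, k, hi.symm, hk, hik, fun h =>
    hG.isAcyclic.cliqueFree le_rfl {i, j, k} (is3Clique_triple_iff.2 ⟨hi.symm, h, hk⟩)⟩

theorem pathGraph_three_eq_starGraph : pathGraph 3 = starGraph 1 := by
  ext a b
  fin_cases a <;> fin_cases b <;> simp [pathGraph_adj, starGraph_adj]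

end SimpleGraph

section EdgeSplitting

variable {V : Type*} {G : SimpleGraph V} {A : Matrix V V ℝ} {u v : V}

theorem apply_mul_apply_eq_zero_of_leaf (hsp : ∀ i j, i ≠ j → ¬ G.Adj i j → A i j = 0)
    (hleaf : ∀ w, G.Adj v w ↔ w = u) {i j : V} (hij : i ≠ j) (hi : i ≠ v) (hj : j ≠ v) :
    A v i * A v j = 0 := by
  have hrow : ∀ k, k ≠ v → k ≠ u → A v k = 0 :=
    fun k hkv hku => hsp v k (Ne.symm hkv) fun h => hku ((hleaf k).1 h)
  by_cases hiu : i = u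
  · subst hiu
    rw [hrow j hj (Ne.symm hij), mul_zero]
  · rw [hrow i hi hiu, zero_mul]

variable [Fintype V]

/-- `c` splits `A` along the edges of `G`: `A` is the sum of the positive semidefinite matrices
`!![c i j, A i j; A i j, c j i]` placed on the edges `{i, j}` and of a nonnegative diagonal. -/
structure IsEdgeSplitting (G : SimpleGraph V) (A : Matrix V V ℝ) (c : V → V → ℝ) : Prop where
  nonneg : ∀ i j, 0 ≤ c i j
  mul_eq_sq : ∀ i j, G.Adj i j → c i j * c j i = A i j ^ 2
  sum_le : ∀ i, ∑ j, c i j ≤ A i i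

theorem IsEdgeSplitting.le_diag {c : V → V → ℝ} (hc : IsEdgeSplitting G A c) (i j : V) :
    c i j ≤ A i i :=
  (Finset.single_le_sum (fun k _ => hc.nonneg i k) (Finset.mem_univ j)).trans (hc.sum_le i)

theorem schurComplementAt_eq_zero_of_not_adj (hA : A.PosSemidef)
    (hsp : ∀ i j, i ≠ j → ¬ G.Adj i j → A i j = 0) (hleaf : ∀ w, G.Adj v w ↔ w = u)
    (i j : V) (hij : i ≠ j) (hnadj : ¬ (G.deleteIncidenceSet v).Adj i j) :
    A.schurComplementAt v i j = 0 := by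
  by_cases hi : i = v
  · subst hi
    exact hA.schurComplementAt_apply_self_left i j
  by_cases hj : j = v
  · subst hj
    rw [(hA.schurComplementAt j).apply_comm]
    exact hA.schurComplementAt_apply_self_left j i
  rw [deleteIncidenceSet_adj, not_and_or, not_and_or, not_not, not_not] at hnadj
  rw [schurComplementAt_apply, hsp i j hij (hnadj.resolve_right (by tauto)),
    apply_mul_apply_eq_zero_of_leaf hsp hleaf hij hi hj]
  simp

theorem IsEdgeSplitting.of_schurComplementAt {c : V → V → ℝ} (hA : A.PosSemidef)
    (hsp : ∀ i j, i ≠ j → ¬ G.Adj i j → A i j = 0) (hleaf : ∀ w, G.Adj v w ↔ w = u)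
    (hc : IsEdgeSplitting (G.deleteIncidenceSet v) (A.schurComplementAt v) c) :
    ∃ c', IsEdgeSplitting G A c' := by
  have hvu : v ≠ u := ((hleaf u).2 rfl).ne
  have hpivot : A v v * (A v u ^ 2 / A v v) = A v u ^ 2 := by
    rcases eq_or_ne (A v v) 0 with h | h
    · simp [h, hA.apply_eq_zero_of_diag_eq_zero h]
    · field_simp
  -- The block on the edge `vu` is the rank-one matrix removed by the Schur complement.
  refine ⟨fun i j => if i = v then (if j = u then A v v else 0)
      else if j = v then A v i ^ 2 / A v v else c i j,
    ⟨fun i j => ?_, fun i j hij => ?_, fun i => ?_⟩⟩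
  · split_ifs
    exacts [hA.diag_nonneg, le_rfl, div_nonneg (sq_nonneg _) hA.diag_nonneg, hc.nonneg i j]
  · by_cases hi : i = v
    · subst hi
      obtain rfl := (hleaf j).1 hij
      simpa [hvu.symm] using hpivot
    by_cases hj : j = v
    · subst hj
      obtain rfl := (hleaf i).1 hij.symm
      simpa [hvu.symm, hA.apply_comm i j, mul_comm] using hpivot
    · simp only [if_neg hi, if_neg hj]
      rw [hc.mul_eq_sq i j (deleteIncidenceSet_adj.2 ⟨hij, hi, hj⟩), schurComplementAt_apply,
        apply_mul_apply_eq_zero_of_leaf hsp hleaf hij.ne hi hj, zero_div, sub_zero]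
  · by_cases hi : i = v
    · subst hi
      simp
    calc ∑ j, (if i = v then (if j = u then A v v else 0)
          else if j = v then A v i ^ 2 / A v v else c i j)
        ≤ ∑ j, ((if j = v then A v i ^ 2 / A v v else 0) + c i j) := by
          refine Finset.sum_le_sum fun j _ => ?_
          simp only [if_neg hi]
          split_ifs
          · linarith [hc.nonneg i j]
          · simp
      _ = A v i ^ 2 / A v v + ∑ j, c i j := by simp [Finset.sum_add_distrib]
      _ ≤ A v i ^ 2 / A v v + A.schurComplementAt v i i := by gcongr; exact hc.sum_le i
      _ = A i i := by rw [schurComplementAt_apply]; ring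

theorem exists_isEdgeSplitting_of_isAcyclic (hG : G.IsAcyclic) (hA : A.PosSemidef)
    (hsp : ∀ i j, i ≠ j → ¬ G.Adj i j → A i j = 0) : ∃ c, IsEdgeSplitting G A c := by
  induction G using WellFoundedLT.induction generalizing A with
  | ind G ih =>
  by_cases hedge : ∃ a b, G.Adj a b
  · obtain ⟨a, b, hab⟩ := hedge
    obtain ⟨v, u, hvu, hleaf⟩ := hG.exists_adj_forall_adj_eq hab
    have hleaf' : ∀ w, G.Adj v w ↔ w = u := fun w => ⟨hleaf w, fun h => h ▸ hvu⟩
    have hlt : G.deleteIncidenceSet v < G := (deleteIncidenceSet_le G v).lt_of_ne fun h => by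
      have := hvu
      rw [← h, deleteIncidenceSet_adj] at this
      exact this.2.1 rfl
    obtain ⟨c, hc⟩ := ih _ hlt (hG.anti hlt.le) (hA.schurComplementAt v)
      (schurComplementAt_eq_zero_of_not_adj hA hsp hleaf')
    exact hc.of_schurComplementAt hA hsp hleaf'
  · push Not at hedge
    exact ⟨0, fun _ _ => le_rfl, fun i j h => (hedge i j h).elim,
      fun i => by simpa using hA.diag_nonneg⟩

end EdgeSplitting

theorem sum_le_of_superadditive {I : Set ℝ} {f : ℝ → ℝ} (hI : ∀ x ∈ I, Set.Icc 0 x ⊆ I)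
    (hf : ∀ x ∈ I, 0 ≤ f x) (hsuper : ∀ x ∈ I, ∀ y ∈ I, x + y ∈ I → f x + f y ≤ f (x + y))
    {ι : Type*} (s : Finset ι) {g : ι → ℝ} (hg : ∀ i ∈ s, 0 ≤ g i) {t : ℝ} (ht : t ∈ I)
    (hle : ∑ i ∈ s, g i ≤ t) : ∑ i ∈ s, f (g i) ≤ f t := by
  classical
  induction s using Finset.induction_on generalizing t with
  | empty => simpa using hf t ht
  | insert a s ha ih =>
    rw [Finset.sum_insert ha] at hle ⊢
    have hga := hg a (Finset.mem_insert_self a s)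
    have hs : 0 ≤ ∑ i ∈ s, g i := Finset.sum_nonneg fun i hi => hg i (Finset.mem_insert_of_mem hi)
    have hrest : t - g a ∈ I := hI t ht ⟨by linarith, by linarith⟩
    have h := hsuper (g a) (hI t ht ⟨hga, by linarith⟩) (t - g a) hrest (by simpa using ht)
    rw [add_sub_cancel] at h
    linarith [ih (fun i hi => hg i (Finset.mem_insert_of_mem hi)) hrest (by linarith)]

section EntrywiseApplication

variable {I : Set ℝ} {f : ℝ → ℝ} {n : ℕ} {G : SimpleGraph (Fin n)}

theorem isHermitian_applyG {A : Matrix (Fin n) (Fin n) ℝ} (hA : A.IsHermitian) :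
    (applyG G f A).IsHermitian :=
  IsHermitian.ext fun i j => by
    simp [applyG, eq_comm (a := j), G.adj_comm j i, ← hA.apply i j]

theorem sparsePattern_applyG (A : Matrix (Fin n) (Fin n) ℝ) : sparsePattern G (applyG G f A) :=
  fun i j hij hnadj => by simp [applyG, hij, hnadj]

theorem memPG_applyG_of_isAcyclic (hI : ∀ x ∈ I, Set.Icc 0 x ⊆ I) (hI₀ : I ⊆ Set.Ici 0)
    (hf : ∀ x ∈ I, 0 ≤ f x) (hsqrt : ∀ x ∈ I, ∀ y ∈ I, f (Real.sqrt (x * y)) ^ 2 ≤ f x * f y)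
    (hsuper : ∀ x ∈ I, ∀ y ∈ I, x + y ∈ I → f x + f y ≤ f (x + y)) (hG : G.IsAcyclic)
    {A : Matrix (Fin n) (Fin n) ℝ} (hA : memPG G I A) : memPG G Set.univ (applyG G f A) := by
  obtain ⟨hpsd, hmem, hsp⟩ := hA
  obtain ⟨c, hc⟩ := exists_isEdgeSplitting_of_isAcyclic hG hpsd hsp
  have hcI : ∀ i j, c i j ∈ I := fun i j => hI _ (hmem i i) ⟨hc.nonneg i j, hc.le_diag i j⟩
  refine ⟨posSemidef_of_sq_le_mul_of_sum_le (isHermitian_applyG hpsd.isHermitian)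
    (fun i j => f (c i j)) (fun i j => hf _ (hcI i j)) (fun i j hij => ?_) (fun i => ?_),
    fun _ _ => trivial, sparsePattern_applyG A⟩
  · by_cases hadj : G.Adj i j
    · have h := hsqrt _ (hcI i j) _ (hcI j i)
      rw [hc.mul_eq_sq i j hadj, Real.sqrt_sq (hI₀ (hmem i j))] at h
      simpa [applyG, hadj] using h
    · simpa [applyG, hij, hadj] using mul_nonneg (hf _ (hcI i j)) (hf _ (hcI j i))
  · simpa [applyG] using sum_le_of_superadditive hI hf hsuper Finset.univ
      (fun j _ => hc.nonneg i j) (hmem i i) (hc.sum_le i)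

theorem sparsePattern_vecMulVec_of_adj {i j : Fin n} (hij : G.Adj i j) {w : Fin n → ℝ}
    (hw : ∀ a, w a ≠ 0 → a = i ∨ a = j) : sparsePattern G (vecMulVec w w) := by
  intro a b hab hnadj
  rw [vecMulVec_apply]
  by_contra h
  rcases hw a (left_ne_zero_of_mul h) with rfl | rfl <;>
    rcases hw b (right_ne_zero_of_mul h) with rfl | rfl
  exacts [hab rfl, hnadj hij, hnadj hij.symm, hab rfl]

theorem sq_le_mul_of_forall_memPG_applyG (hI : ∀ x ∈ I, Set.Icc 0 x ⊆ I) (hI₀ : I ⊆ Set.Ici 0)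
    (hH : ∀ A, memPG G I A → memPG G Set.univ (applyG G f A)) {i j : Fin n} (hij : G.Adj i j)
    {x y : ℝ} (hx : x ∈ I) (hy : y ∈ I) : f (Real.sqrt (x * y)) ^ 2 ≤ f x * f y := by
  set w : Fin n → ℝ := fun a => if a = i then Real.sqrt x else if a = j then Real.sqrt y else 0
  have hmax : max x y ∈ I := by rcases le_total x y with h | h <;> simp [h, hx, hy]
  have hw : ∀ a, 0 ≤ w a ∧ w a ≤ Real.sqrt (max x y) := by
    intro a
    simp only [w]
    split_ifs
    exacts [⟨Real.sqrt_nonneg x, Real.sqrt_le_sqrt (le_max_left x y)⟩,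
      ⟨Real.sqrt_nonneg y, Real.sqrt_le_sqrt (le_max_right x y)⟩, ⟨le_rfl, Real.sqrt_nonneg _⟩]
  have hA : memPG G I (vecMulVec w w) := by
    refine ⟨by simpa using posSemidef_vecMulVec_self_star w, fun a b => ?_,
      sparsePattern_vecMulVec_of_adj hij fun a ha => ?_⟩
    · refine hI _ hmax ⟨mul_nonneg (hw a).1 (hw b).1, ?_⟩
      rw [vecMulVec_apply, ← Real.mul_self_sqrt (hI₀ hmax)]
      exact mul_le_mul (hw a).2 (hw b).2 (hw b).1 (Real.sqrt_nonneg _)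
    · by_contra h
      simp [w, not_or.mp h] at ha
  have hM := (hH _ hA).1.sq_apply_le_mul i j
  simpa [applyG, hij, hij.ne, hij.ne.symm, w, vecMulVec_apply, Real.mul_self_sqrt (hI₀ hx),
    Real.mul_self_sqrt (hI₀ hy), ← Real.sqrt_mul (hI₀ hx)] using hM

theorem superadditive_of_forall_memPG_applyG (hI : ∀ x ∈ I, Set.Icc 0 x ⊆ I)
    (hI₀ : I ⊆ Set.Ici 0) (hH : ∀ A, memPG G I A → memPG G Set.univ (applyG G f A))
    {i j k : Fin n} (hij : G.Adj i j) (hjk : G.Adj j k) (hik : i ≠ k) (hnik : ¬ G.Adj i k)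
    {x y : ℝ} (hx : x ∈ I) (hy : y ∈ I) (hxy : x + y ∈ I) : f x + f y ≤ f (x + y) := by
  set u : Fin n → ℝ := fun a => if a = i ∨ a = j then 1 else 0
  set w : Fin n → ℝ := fun a => if a = j ∨ a = k then 1 else 0
  have hunit : ∀ (z : Fin n → ℝ), (∀ a, z a = 0 ∨ z a = 1) → ∀ a b, z a * z b ∈ Set.Icc 0 1 := by
    intro z hz a b
    rcases hz a with h | h <;> rcases hz b with h' | h' <;> simp [h, h']
  have hu := hunit u fun a => by simp only [u]; split_ifs <;> simp
  have hw := hunit w fun a => by simp only [w]; split_ifs <;> simp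
  have hA : memPG G I (x • vecMulVec u u + y • vecMulVec w w) := by
    refine ⟨?_, fun a b => hI _ hxy ?_, fun a b hab hnadj => ?_⟩
    · have hpsd : ∀ z : Fin n → ℝ, (vecMulVec z z).PosSemidef := fun z => by
        simpa using posSemidef_vecMulVec_self_star z
      exact ((hpsd u).smul (hI₀ hx)).add ((hpsd w).smul (hI₀ hy))
    · simp only [Matrix.add_apply, Matrix.smul_apply, vecMulVec_apply, smul_eq_mul]
      obtain ⟨hu₀, hu₁⟩ := hu a b
      obtain ⟨hw₀, hw₁⟩ := hw a b
      have hx₀ : 0 ≤ x := hI₀ hx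
      have hy₀ : 0 ≤ y := hI₀ hy
      constructor <;> nlinarith
    · have hsu := sparsePattern_vecMulVec_of_adj hij (w := u) fun a ha => by
        by_contra h; simp [u, h] at ha
      have hsw := sparsePattern_vecMulVec_of_adj hjk (w := w) fun a ha => by
        by_contra h; simp [w, h] at ha
      simp [hsu a b hab hnadj, hsw a b hab hnadj]
  -- On `i, j, k` the image is `!![f x, f x, 0; f x, f (x + y), f y; 0, f y, f y]`.
  have hM := ((hH _ hA).1.submatrix ![i, j, k]).dotProduct_mulVec_nonneg ![-1, 1, -1]
  simp [applyG, u, w, vecMulVec_apply, dotProduct, mulVec, Fin.sum_univ_three, hij, hjk, hnik,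
    hij.ne, hjk.ne, hik, hij.ne.symm, hjk.ne.symm, hik.symm, hij.symm, hjk.symm,
    G.adj_comm k i] at hM
  linarith

theorem sq_le_mul_and_superadditive_of_forall_memPG_applyG (hI : ∀ x ∈ I, Set.Icc 0 x ⊆ I)
    (hI₀ : I ⊆ Set.Ici 0) (hH : ∀ A, memPG G I A → memPG G Set.univ (applyG G f A))
    (hpath : ∃ i j k, G.Adj i j ∧ G.Adj j k ∧ i ≠ k ∧ ¬ G.Adj i k) :
    (∀ x ∈ I, ∀ y ∈ I, f (Real.sqrt (x * y)) ^ 2 ≤ f x * f y) ∧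
      (∀ x ∈ I, ∀ y ∈ I, x + y ∈ I → f x + f y ≤ f (x + y)) := by
  obtain ⟨i, j, k, hij, hjk, hik, hnik⟩ := hpath
  exact ⟨fun x hx y hy => sq_le_mul_of_forall_memPG_applyG hI hI₀ hH hij hx hy,
    fun x hx y hy hxy => superadditive_of_forall_memPG_applyG hI hI₀ hH hij hjk hik hnik hx hy hxy⟩

end EntrywiseApplication

theorem stmt0_general (R : ℝ≥0∞) (I : Set ℝ)
    (hI : I = {x : ℝ | 0 ≤ x ∧ ENNReal.ofReal x < R})
    (f : ℝ → ℝ) (hf : ∀ x ∈ I, 0 ≤ f x)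
    {n : ℕ} (hn : 3 ≤ n) (G : SimpleGraph (Fin n)) (hG : G.IsTree) :
    List.TFAE
      [ ∀ A : Matrix (Fin n) (Fin n) ℝ, memPG G I A → memPG G Set.univ (applyG G f A),
        ∀ (m : ℕ) (T : SimpleGraph (Fin m)), T.IsTree →
          ∀ A : Matrix (Fin m) (Fin m) ℝ, memPG T I A → memPG T Set.univ (applyG T f A),
        ∀ A : Matrix (Fin 3) (Fin 3) ℝ, memPG (SimpleGraph.pathGraph 3) I A →
          memPG (SimpleGraph.pathGraph 3) Set.univ (applyG (SimpleGraph.pathGraph 3) f A),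
        (∀ x ∈ I, ∀ y ∈ I, (f (Real.sqrt (x * y))) ^ 2 ≤ f x * f y) ∧
          (∀ x ∈ I, ∀ y ∈ I, x + y ∈ I → f x + f y ≤ f (x + y)) ] := by
  have hIcc : ∀ x ∈ I, Set.Icc 0 x ⊆ I := hI ▸ fun x hx y hy =>
    ⟨hy.1, (ENNReal.ofReal_le_ofReal hy.2).trans_lt hx.2⟩
  have hI₀ : I ⊆ Set.Ici 0 := hI ▸ fun x hx => hx.1
  tfae_have 2 → 1 := fun h => h n G hG
  tfae_have 2 → 3 := fun h => h 3 _ (pathGraph_three_eq_starGraph ▸ isTree_starGraph 1)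
  tfae_have 4 → 2 := fun ⟨hsqrt, hsuper⟩ _ _ hT _ =>
    memPG_applyG_of_isAcyclic hIcc hI₀ hf hsqrt hsuper hT.isAcyclic
  tfae_have 1 → 4 := fun h =>
    sq_le_mul_and_superadditive_of_forall_memPG_applyG hIcc hI₀ h
      (hG.exists_adj_adj_not_adj (by simpa using hn))
  tfae_have 3 → 4 := fun h =>
    sq_le_mul_and_superadditive_of_forall_memPG_applyG hIcc hI₀ h
      ⟨0, 1, 2, by simp [pathGraph_adj]⟩
  tfae_finish

theorem stmt0 (R : ℝ≥0∞) (hR : 0 < R) (I : Set ℝ)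
    (hI : I = {x : ℝ | 0 ≤ x ∧ ENNReal.ofReal x < R})
    (f : ℝ → ℝ) (hf : ∀ x ∈ I, 0 ≤ f x)
    {n : ℕ} (hn : 3 ≤ n) (G : SimpleGraph (Fin n)) (hG : G.IsTree) :
    List.TFAE
      [ ∀ A : Matrix (Fin n) (Fin n) ℝ, memPG G I A → memPG G Set.univ (applyG G f A),
        ∀ (m : ℕ) (T : SimpleGraph (Fin m)), T.IsTree →
          ∀ A : Matrix (Fin m) (Fin m) ℝ, memPG T I A → memPG T Set.univ (applyG T f A),
        ∀ A : Matrix (Fin 3) (Fin 3) ℝ, memPG (SimpleGraph.pathGraph 3) I A →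
          memPG (SimpleGraph.pathGraph 3) Set.univ (applyG (SimpleGraph.pathGraph 3) f A),
        (∀ x ∈ I, ∀ y ∈ I, (f (Real.sqrt (x * y))) ^ 2 ≤ f x * f y) ∧
          (∀ x ∈ I, ∀ y ∈ I, x + y ∈ I → f x + f y ≤ f (x + y)) ] :=
  stmt0_general R I hI f hf hn G hG
end

section
/- Let (G_n)_{n ≥ 1} be a sequence of finite simple graphs with sup_{n ≥ 1} Δ(G_n) = ∞. Let I = [0,R) for some 0 < R ≤ ∞, and let f : I → ℝ be a function such that for every n ≥ 1, every symmetric matrix M ∈ S_{G_n}(I), and every vector β ∈ ℝ^{|G_n|} with βᵀ M β ≥ 0, one has βᵀ f_{G_n}[M] β ≥ 0. Then f is absolutely monotonic on I, i.e. f equals a power series Σ_{k=0}^∞ a_k x^k converging on [0,R) with all a_k ≥ 0. -/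
/-!
The hypothesis passes to induced subgraphs (extend test matrices and vectors by zero), so only
graphs on at most four vertices matter. On an edge, `2 × 2` test matrices show that `f` is
nonnegative and monotone on `I`. A vertex of degree at least three either has two non-adjacent
neighbours, or it spans a `K₄` together with three of its neighbours. In the first case the zero
matrix on the induced path `p - v - q`, tested against `(1, -2, 1)`, forces `f 0 = 0`, and a
singular `2 × 2` matrix then gives `f x * y = f y * x`. In the second case a test matrix on `K₄`
gives the midpoint equation `f x + f y = 2 f ((x + y) / 2)`, so `f - f 0` is additive and monotone
on `I`, hence linear. Either way `f x = f 0 + c x` with `f 0, c ≥ 0`.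
-/

open Matrix
open scoped Classical ENNReal

def PreservesNonnegForms {n : ℕ} (G : SimpleGraph (Fin n)) (I : Set ℝ) (f : ℝ → ℝ) :
    Prop :=
  ∀ M : Matrix (Fin n) (Fin n) ℝ, M.IsSymm → (∀ i j, M i j ∈ I) → sparsePattern G M →
    ∀ β : Fin n → ℝ, 0 ≤ β ⬝ᵥ M *ᵥ β → 0 ≤ β ⬝ᵥ applyG G f M *ᵥ β

section ExtendByZero

variable {ι κ : Type*} {e : ι → κ}

theorem sum_mul_extend_zero [Fintype ι] [Fintype κ] (he : e.Injective) (w : κ → ℝ)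
    (v : ι → ℝ) :
    ∑ i, w i * Function.extend e v 0 i = ∑ a, w (e a) * v a := by
  rw [← Finset.sum_subset (Finset.subset_univ (Finset.univ.map ⟨e, he⟩)), Finset.sum_map]
  · simp only [Function.Embedding.coeFn_mk, he.extend_apply]
  · intro i _ hi
    rw [Function.extend_apply' _ _ _ (by simpa using hi), Pi.zero_apply, mul_zero]

theorem extend_zero_dotProduct_mulVec [Fintype ι] [Fintype κ] (he : e.Injective)
    (A : Matrix κ κ ℝ) (β : ι → ℝ) :
    Function.extend e β 0 ⬝ᵥ A *ᵥ Function.extend e β 0 =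
      β ⬝ᵥ A.submatrix e e *ᵥ β := by
  rw [dotProduct_comm, dotProduct_comm β]
  simp only [dotProduct, mulVec, sum_mul_extend_zero he, submatrix_apply]

noncomputable def extendZero (e : ι → κ) (A : Matrix ι ι ℝ) : Matrix κ κ ℝ :=
  Function.extend e (fun a => Function.extend e (A a) 0) 0

theorem extendZero_apply_apply (he : e.Injective) (A : Matrix ι ι ℝ) (a b : ι) :
    extendZero e A (e a) (e b) = A a b := by
  simp only [extendZero, he.extend_apply]

theorem extendZero_apply_of_not_mem (he : e.Injective) (A : Matrix ι ι ℝ) {i j : κ}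
    (h : i ∉ Set.range e ∨ j ∉ Set.range e) : extendZero e A i j = 0 := by
  rcases h with h | h
  · simp [extendZero, Function.extend_apply' _ _ _ h]
  · by_cases hi : i ∈ Set.range e
    · obtain ⟨a, rfl⟩ := hi
      simp [extendZero, he.extend_apply, Function.extend_apply' _ _ _ h]
    · simp [extendZero, Function.extend_apply' _ _ _ hi]

theorem extendZero_cases (he : e.Injective) (A : Matrix ι ι ℝ) (i j : κ) :
    (∃ a b, i = e a ∧ j = e b ∧ extendZero e A i j = A a b) ∨ extendZero e A i j = 0 := by
  by_cases h : i ∈ Set.range e ∧ j ∈ Set.range e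
  · obtain ⟨⟨a, rfl⟩, ⟨b, rfl⟩⟩ := h
    exact Or.inl ⟨a, b, rfl, rfl, extendZero_apply_apply he A a b⟩
  · exact Or.inr (extendZero_apply_of_not_mem he A (not_and_or.mp h))

theorem transpose_extendZero (he : e.Injective) (A : Matrix ι ι ℝ) :
    (extendZero e A)ᵀ = extendZero e Aᵀ := by
  ext i j
  by_cases hi : i ∈ Set.range e
  · by_cases hj : j ∈ Set.range e
    · obtain ⟨⟨a, rfl⟩, ⟨b, rfl⟩⟩ := And.intro hi hj
      simp only [transpose_apply, extendZero_apply_apply he]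
    · simp only [transpose_apply, extendZero_apply_of_not_mem he _ (Or.inl hj),
        extendZero_apply_of_not_mem he _ (Or.inr hj)]
  · simp only [transpose_apply, extendZero_apply_of_not_mem he _ (Or.inl hi),
      extendZero_apply_of_not_mem he _ (Or.inr hi)]

theorem submatrix_extendZero (he : e.Injective) (A : Matrix ι ι ℝ) :
    (extendZero e A).submatrix e e = A := by
  ext a b
  exact extendZero_apply_apply he A a b

end ExtendByZero

theorem applyG_submatrix {n k : ℕ} (G : SimpleGraph (Fin n)) (f : ℝ → ℝ)
    {e : Fin k → Fin n} (he : e.Injective) (M : Matrix (Fin n) (Fin n) ℝ) :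
    (applyG G f M).submatrix e e = applyG (G.comap e) f (M.submatrix e e) := by
  ext a b
  simp [applyG, he.eq_iff]

theorem PreservesNonnegForms.comap {n k : ℕ} {G : SimpleGraph (Fin n)} {I : Set ℝ}
    {f : ℝ → ℝ} (hf : PreservesNonnegForms G I f) (h0 : 0 ∈ I) (e : Fin k → Fin n)
    (he : e.Injective) : PreservesNonnegForms (G.comap e) I f := by
  intro A hA hAI hAG β hβ
  have hsymm : (extendZero e A).IsSymm := by
    rw [IsSymm, transpose_extendZero he, hA.eq]
  have hI : ∀ i j, extendZero e A i j ∈ I := by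
    intro i j
    rcases extendZero_cases he A i j with ⟨a, b, -, -, h⟩ | h <;> rw [h]
    exacts [hAI a b, h0]
  have hG : sparsePattern G (extendZero e A) := by
    intro i j hij hGij
    rcases extendZero_cases he A i j with ⟨a, b, rfl, rfl, h⟩ | h <;> rw [h]
    exact hAG a b (fun hab => hij (congrArg e hab)) hGij
  have key := hf _ hsymm hI hG (Function.extend e β 0)
  rw [extend_zero_dotProduct_mulVec he, extend_zero_dotProduct_mulVec he,
    submatrix_extendZero he, applyG_submatrix G f he, submatrix_extendZero he] at key
  exact key hβ

theorem applyG_eq_map_of_forall_adj {n : ℕ} {G : SimpleGraph (Fin n)}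
    (hG : ∀ i j, i ≠ j → G.Adj i j) (f : ℝ → ℝ) (M : Matrix (Fin n) (Fin n) ℝ) :
    applyG G f M = M.map f := by
  ext i j
  by_cases hij : i = j <;> simp [applyG, hij, hG i j]

namespace PreservesNonnegForms

variable {n : ℕ} {G : SimpleGraph (Fin n)} {I : Set ℝ} {f : ℝ → ℝ}

theorem quadForm_map_nonneg_of_adj (hf : PreservesNonnegForms G I f) (h0 : 0 ∈ I)
    {u w : Fin n} (huw : G.Adj u w) {a b c : ℝ} (ha : a ∈ I) (hb : b ∈ I) (hc : c ∈ I)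
    (s t : ℝ)
    (h : 0 ≤ a * s ^ 2 + 2 * b * s * t + c * t ^ 2) :
    0 ≤ f a * s ^ 2 + 2 * f b * s * t + f c * t ^ 2 := by
  have hne := G.ne_of_adj huw
  have hH :=
    hf.comap h0 ![u, w] (by simp [Function.Injective, Fin.forall_fin_succ, hne, hne.symm])
  have h01 : (G.comap ![u, w]).Adj 0 1 := by simpa using huw
  have key := hH !![a, b; b, c] (by ext i j; fin_cases i <;> fin_cases j <;> rfl)
    (by intro i j; fin_cases i <;> fin_cases j <;> assumption)
    (by intro i j hij hH; fin_cases i <;> fin_cases j <;> simp_all [huw.symm]) ![s, t]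
  simp only [applyG, dotProduct, mulVec, Fin.sum_univ_two] at key
  simp only [of_apply, cons_val', cons_val_zero, cons_val_one, empty_val', cons_val_fin_one,
    true_or, or_true, h01, h01.symm, if_true] at key
  linear_combination key (by linear_combination h)

theorem map_zero_nonpos_of_not_adj (hf : PreservesNonnegForms G I f) (h0 : 0 ∈ I) {p q r : Fin n}
    (hpq : G.Adj p q) (hqr : G.Adj q r) (hpr : p ≠ r) (hnpr : ¬ G.Adj p r) : f 0 ≤ 0 := by
  have hH := hf.comap h0 ![p, q, r] (by
    simp [Function.Injective, Fin.forall_fin_succ, G.ne_of_adj hpq, (G.ne_of_adj hpq).symm,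
      G.ne_of_adj hqr, (G.ne_of_adj hqr).symm, hpr, hpr.symm])
  have hnrp : ¬ G.Adj r p := fun h => hnpr h.symm
  have key := hH 0 (by simp [IsSymm]) (fun _ _ => h0) (fun _ _ _ _ => rfl) ![1, -2, 1]
  simp only [applyG, dotProduct, mulVec, Fin.sum_univ_three] at key
  simp [hpq, hpq.symm, hqr, hqr.symm, hnpr, hnrp] at key
  linarith

theorem map_add_map_eq_two_mul (hf : PreservesNonnegForms G I f) (h0 : 0 ∈ I)
    {e : Fin 4 → Fin n} (he : ∀ i j, i ≠ j → G.Adj (e i) (e j)) {x y m : ℝ} (hx : x ∈ I)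
    (hy : y ∈ I) (hm : m ∈ I) (hxy : x + y = 2 * m) : f x + f y = 2 * f m := by
  have hH := hf.comap h0 e fun i j hij => by_contra fun hne => (G.ne_of_adj (he i j hne)) hij
  -- The form of `M` at `β` is `2ε(x + y - 2m) = 0`; the zero entries of `M` contribute
  -- `f 0 * (∑ i, β i) ^ 2 = 0` to the form of `f[M]`, which is thus `2ε(f x + f y - 2 f m)`.
  have key (ε : ℝ) : 0 ≤ ε * (f x + f y - 2 * f m) := by
    have := hH !![0, 0, x, m; 0, 0, m, y; x, m, 0, 0; m, y, 0, 0]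
      (by ext i j; fin_cases i <;> fin_cases j <;> rfl)
      (by intro i j; fin_cases i <;> fin_cases j <;> assumption)
      (fun i j hij hnadj => absurd (he i j hij) hnadj) ![1, -1, ε, -ε]
    rw [applyG_eq_map_of_forall_adj (G := G.comap e) he] at this
    simp [dotProduct, mulVec, Fin.sum_univ_four] at this
    linear_combination (1 / 2 : ℝ) * this (by linear_combination -2 * ε * hxy)
  linarith [key 1, key (-1)]

theorem monotoneOn (hf : PreservesNonnegForms G I f) (h0 : 0 ∈ I) {u w : Fin n}
    (huw : G.Adj u w) : MonotoneOn f I := by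
  intro x hx y hy hxy
  have := hf.quadForm_map_nonneg_of_adj h0 huw hy hx hy 1 (-1) (by linarith)
  linarith

theorem map_zero_nonneg (hf : PreservesNonnegForms G I f) (h0 : 0 ∈ I) {u w : Fin n}
    (huw : G.Adj u w) : 0 ≤ f 0 := by
  have := hf.quadForm_map_nonneg_of_adj h0 huw h0 h0 h0 1 1 (by norm_num)
  linarith

theorem mul_le_mul_of_map_zero (hf : PreservesNonnegForms G I f) (h0 : 0 ∈ I) {u w : Fin n}
    (huw : G.Adj u w) (hf0 : f 0 = 0) {x y : ℝ} (hx : x ∈ I) (hy : y ∈ I) (hy0 : 0 < y) :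
    f y * x ≤ f x * y := by
  have := hf.quadForm_map_nonneg_of_adj h0 huw hx hy h0 (2 * y) (-x) (le_of_eq (by ring))
  rw [hf0] at this
  nlinarith

end PreservesNonnegForms

section AdditiveOn

variable {S : Set ℝ} {g : ℝ → ℝ}

theorem map_natCast_mul_of_additiveOn (hS : S.OrdConnected) (hS0 : 0 ∈ S)
    (hadd : ∀ x ∈ S, ∀ y ∈ S, x + y ∈ S → g (x + y) = g x + g y)
    (n : ℕ) {t : ℝ} (ht : 0 ≤ t) (hnt : n * t ∈ S) : g (n * t) = n * g t := by
  induction n with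
  | zero =>
    have := hadd 0 hS0 0 hS0 (by simpa using hS0)
    simp only [add_zero] at this
    simp only [Nat.cast_zero, zero_mul]
    linarith
  | succ k ih =>
    have hkt : (k : ℝ) * t ∈ S := hS.out hS0 hnt ⟨by positivity, by push_cast; nlinarith⟩
    have htS : t ∈ S := hS.out hS0 hnt ⟨ht, by push_cast; nlinarith⟩
    push_cast at hnt ⊢
    rw [add_one_mul, hadd _ hkt _ htS (by rwa [← add_one_mul]), ih hkt]
    ring

theorem mul_le_mul_of_additiveOn_of_monotoneOn (hS : S.OrdConnected) (hS0 : 0 ∈ S)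
    (hadd : ∀ x ∈ S, ∀ y ∈ S, x + y ∈ S → g (x + y) = g x + g y)
    (hmono : MonotoneOn g S) {x y : ℝ} (hx : x ∈ S) (hy : y ∈ S) (hx0 : 0 ≤ x)
    (hy0 : 0 < y) : g y * x ≤ g x * y := by
  have hg0 : g 0 = 0 := by
    simpa using map_natCast_mul_of_additiveOn hS hS0 hadd 0 le_rfl (by simpa using hS0)
  have hbound : ∀ n : ℕ, 0 < n → g y * x - g y * y / n ≤ g x * y := by
    intro n hn
    have hn' : (1 : ℝ) ≤ n := by exact_mod_cast hn
    set t := y / n with ht_def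
    have ht : 0 < t := by positivity
    have hyt : y = n * t := by rw [ht_def]; field_simp
    set k := ⌊x / t⌋₊
    have hkx : k * t ≤ x := (le_div_iff₀ ht).1 (Nat.floor_le (div_nonneg hx0 ht.le))
    have hxk : x < (k + 1) * t := (div_lt_iff₀ ht).1 (Nat.lt_floor_add_one _)
    have hkS : k * t ∈ S := hS.out hS0 hx ⟨by positivity, hkx⟩
    have htS : t ∈ S := hS.out hS0 hy ⟨ht.le, by nlinarith⟩
    have hgt : 0 ≤ g t := hg0 ▸ hmono hS0 htS ht.le
    have hgy : g y = n * g t := by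
      rw [← map_natCast_mul_of_additiveOn hS hS0 hadd n ht.le (hyt ▸ hy), ← hyt]
    have hgx : k * g t ≤ g x := by
      rw [← map_natCast_mul_of_additiveOn hS hS0 hadd k ht.le hkS]
      exact hmono hkS hx hkx
    calc g y * x - g y * y / n = n * (g t * (x - t)) := by
          rw [hgy, hyt]; field_simp
      _ ≤ n * (g t * (k * t)) := by gcongr; linarith
      _ = n * (k * g t * t) := by ring
      _ ≤ n * (g x * t) := by gcongr
      _ = g x * y := by rw [hyt]; ring
  have hlim : Filter.Tendsto (fun n : ℕ => g y * x - g y * y / n) Filter.atTop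
      (nhds (g y * x)) := by
    simpa using tendsto_const_nhds.sub (tendsto_const_div_atTop_nhds_zero_nat (g y * y))
  exact le_of_tendsto hlim (Filter.eventually_atTop.2 ⟨1, hbound⟩)

end AdditiveOn

namespace PreservesNonnegForms

variable {n : ℕ} {G : SimpleGraph (Fin n)} {I : Set ℝ} {f : ℝ → ℝ}

theorem sub_map_zero_mul_le (hf : PreservesNonnegForms G I f) (hI : I.OrdConnected) (h0 : 0 ∈ I)
    {v : Fin n} (hv : 2 < (G.neighborSet v).ncard) {x y : ℝ} (hx : x ∈ I) (hy : y ∈ I)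
    (hx0 : 0 ≤ x) (hy0 : 0 < y) : (f y - f 0) * x ≤ (f x - f 0) * y := by
  obtain ⟨a, b, c, ha, hb, hc, hab, hac, hbc⟩ := (Set.two_lt_ncard_iff (Set.toFinite _)).1 hv
  rw [SimpleGraph.mem_neighborSet] at ha hb hc
  by_cases hclique : ∀ p q, G.Adj v p → G.Adj v q → p ≠ q → G.Adj p q
  · have he : ∀ i j, i ≠ j → G.Adj (![v, a, b, c] i) (![v, a, b, c] j) := by
      have hab' := hclique a b ha hb hab
      have hac' := hclique a c ha hc hac
      have hbc' := hclique b c hb hc hbc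
      intro i j hij
      fin_cases i <;> fin_cases j <;> simp_all [SimpleGraph.adj_comm]
    have hadd : ∀ x ∈ I, ∀ y ∈ I, x + y ∈ I →
        f (x + y) - f 0 = (f x - f 0) + (f y - f 0) := by
      intro x hx y hy hxy
      have hm : (x + y) / 2 ∈ I := by
        rcases le_total x y with h | h
        · exact hI.out hx hy ⟨by linarith, by linarith⟩
        · exact hI.out hy hx ⟨by linarith, by linarith⟩
      have h1 := hf.map_add_map_eq_two_mul h0 he hx hy hm (by ring)
      have h2 := hf.map_add_map_eq_two_mul h0 he hxy h0 hm (by ring)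
      linarith
    have hmono : MonotoneOn (fun z => f z - f 0) I := fun x hx y hy hxy =>
      sub_le_sub_right (hf.monotoneOn h0 ha hx hy hxy) _
    exact mul_le_mul_of_additiveOn_of_monotoneOn hI h0 hadd hmono hx hy hx0 hy0
  · push Not at hclique
    obtain ⟨p, q, hp, hq, hpq, hnpq⟩ := hclique
    have hf0 : f 0 = 0 :=
      le_antisymm (hf.map_zero_nonpos_of_not_adj h0 hp.symm hq hpq hnpq) (hf.map_zero_nonneg h0 ha)
    rw [hf0, sub_zero, sub_zero]
    exact hf.mul_le_mul_of_map_zero h0 ha hf0 hx hy hy0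

end PreservesNonnegForms

theorem eq_add_mul_of_sub_map_zero_mul_le {S : Set ℝ} {f : ℝ → ℝ}
    (h : ∀ x ∈ S, ∀ y ∈ S, 0 ≤ x → 0 < y → (f y - f 0) * x ≤ (f x - f 0) * y)
    {y₀ : ℝ} (hy₀ : y₀ ∈ S) (hy₀0 : 0 < y₀) {x : ℝ} (hx : x ∈ S) (hx0 : 0 ≤ x) :
    f x = f 0 + (f y₀ - f 0) / y₀ * x := by
  rcases hx0.eq_or_lt with rfl | hx0
  · simp
  have h₁ := h x hx y₀ hy₀ hx0.le hy₀0
  have h₂ := h y₀ hy₀ x hx hy₀0.le hx0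
  field_simp
  linarith

theorem hasSum_ite_mul_pow (c₀ c₁ x : ℝ) :
    HasSum (fun k : ℕ => (if k = 0 then c₀ else if k = 1 then c₁ else 0) * x ^ k)
      (c₀ + c₁ * x) := by
  have h : HasSum (fun k : ℕ => (if k = 0 then c₀ else if k = 1 then c₁ else 0) * x ^ k)
      (∑ k ∈ Finset.range 2, (if k = 0 then c₀ else if k = 1 then c₁ else 0) * x ^ k) :=
    hasSum_sum_of_ne_finset_zero fun k hk => by
      rw [Finset.mem_range, not_lt] at hk
      simp [show k ≠ 0 by omega, show k ≠ 1 by omega]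
  simpa [Finset.sum_range_succ] using h

theorem stmt4 (V : ℕ → ℕ) (G : ∀ n : ℕ, SimpleGraph (Fin (V n)))
    (hdeg : ∀ c : ℕ, ∃ n : ℕ, 1 ≤ n ∧ ∃ v : Fin (V n), c ≤ ((G n).neighborSet v).ncard)
    (R : ℝ≥0∞) (hR : 0 < R) (I : Set ℝ)
    (hI : I = {x : ℝ | 0 ≤ x ∧ ENNReal.ofReal x < R})
    (f : ℝ → ℝ)
    (hf : ∀ n : ℕ, 1 ≤ n → ∀ M : Matrix (Fin (V n)) (Fin (V n)) ℝ,
      M.IsSymm → (∀ i j, M i j ∈ I) → sparsePattern (G n) M →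
        ∀ β : Fin (V n) → ℝ, 0 ≤ β ⬝ᵥ M.mulVec β →
          0 ≤ β ⬝ᵥ (applyG (G n) f M).mulVec β) :
    ∃ a : ℕ → ℝ, (∀ k : ℕ, 0 ≤ a k) ∧ ∀ x ∈ I, HasSum (fun k : ℕ => a k * x ^ k) (f x) := by
  subst hI
  set I := {x : ℝ | 0 ≤ x ∧ ENNReal.ofReal x < R}
  have h0 : (0 : ℝ) ∈ I := ⟨le_rfl, by simpa using hR⟩
  have hI : I.OrdConnected :=
    ⟨fun _ hx _ hy _ hz => ⟨hx.1.trans hz.1, (ENNReal.ofReal_le_ofReal hz.2).trans_lt hy.2⟩⟩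
  obtain ⟨y₀, hy₀, hy₀R, hy₀R'⟩ := ENNReal.lt_iff_exists_real_btwn.1 hR
  have hy₀I : y₀ ∈ I := ⟨hy₀, hy₀R'⟩
  have hy₀0 : 0 < y₀ := ENNReal.ofReal_pos.1 hy₀R
  obtain ⟨n, hn, v, hv⟩ := hdeg 3
  have hfn : PreservesNonnegForms (G n) I f := hf n hn
  obtain ⟨w, hw⟩ := Set.nonempty_of_ncard_ne_zero (by omega : ((G n).neighborSet v).ncard ≠ 0)
  have hmono := hfn.monotoneOn h0 hw
  refine ⟨fun k => if k = 0 then f 0 else if k = 1 then (f y₀ - f 0) / y₀ else 0, ?_, ?_⟩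
  · have : 0 ≤ f y₀ - f 0 := sub_nonneg.2 (hmono h0 hy₀I hy₀)
    intro k
    dsimp only
    split_ifs
    exacts [hfn.map_zero_nonneg h0 hw, by positivity, le_rfl]
  · intro x hx
    rw [eq_add_mul_of_sub_map_zero_mul_le (fun _ hx _ hy => hfn.sub_map_zero_mul_le hI h0 hv hx hy)
      hy₀I hy₀0 hx hx.1]
    exact hasSum_ite_mul_pow _ _ x
end

section
/- Let I ⊆ ℝ be an interval with 0 ∈ I, sup I ∉ I, and |inf I| ≤ sup I. Let G be a connected finite simple graph that is not complete, and let f : I → ℝ. If f_G[A] ∈ P_G for every A ∈ P_G(I), then f(0) = 0 and f is superadditive on I ∩ (0,∞), i.e. f(x+y) ≥ f(x) + f(y) whenever x, y, x+y ∈ I ∩ (0,∞). -/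
open Matrix
open scoped Classical ENNReal

/-!
A connected graph that is not complete contains an induced path `u - w - v`: take the first three
vertices of a shortest path between two nonadjacent vertices. Testing the positive semidefinite
matrix `f_G[A]` against `e_u + e_v - e_w`, and using that its `(u, v)` entry vanishes, gives
`f(a_uw) + f(a_wu) + f(a_vw) + f(a_wv) ≤ f(a_uu) + f(a_vv) + f(a_ww)`.
For `A = 0` this says `f 0 ≤ 0`, while `f 0 ≥ 0` as a diagonal entry. For
`A = x 𝟙_{u,w} 𝟙_{u,w}ᵀ + y 𝟙_{v,w} 𝟙_{v,w}ᵀ`, which lies in `P_G(I)` since its entries are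
`0, x, y, x + y`, it says `f x + f y ≤ f (x + y)`.
-/

lemma Matrix.PosSemidef.add_le_of_test_vector {ι : Type*} [Fintype ι] [DecidableEq ι]
    {B : Matrix ι ι ℝ} (hB : B.PosSemidef) (u v w : ι) :
    B u w + B w u + B v w + B w v ≤ B u u + B v v + B w w + B u v + B v u := by
  have h := hB.dotProduct_mulVec_nonneg (Pi.single u 1 + Pi.single v 1 - Pi.single w 1)
  simp only [mulVec_add, mulVec_sub, mulVec_single, dotProduct_add, dotProduct_sub,
    add_dotProduct, sub_dotProduct, single_dotProduct, star_trivial, one_mul, MulOpposite.op_one,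
    one_smul, col_apply] at h
  linarith

noncomputable def blockConst {ι : Type*} (s : Set ι) (c : ℝ) : Matrix ι ι ℝ :=
  c • vecMulVec (s.indicator 1) (s.indicator 1)

lemma blockConst_apply {ι : Type*} (s : Set ι) (c : ℝ) (a b : ι) :
    blockConst s c a b = if a ∈ s ∧ b ∈ s then c else 0 := by
  by_cases ha : a ∈ s <;> by_cases hb : b ∈ s <;> simp [blockConst, vecMulVec_apply, ha, hb]

lemma posSemidef_blockConst {ι : Type*} [Fintype ι] (s : Set ι) {c : ℝ} (hc : 0 ≤ c) :
    (blockConst s c).PosSemidef := by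
  simpa [blockConst] using (posSemidef_vecMulVec_self_star (s.indicator (1 : ι → ℝ))).smul hc

section applyG

variable {n : ℕ} {G : SimpleGraph (Fin n)} {f : ℝ → ℝ} {A : Matrix (Fin n) (Fin n) ℝ}

lemma applyG_apply_self (i : Fin n) : applyG G f A i i = f (A i i) := by
  simp [applyG]

lemma applyG_apply_of_adj {i j : Fin n} (h : G.Adj i j) : applyG G f A i j = f (A i j) := by
  simp [applyG, h]

lemma applyG_apply_of_not_adj {i j : Fin n} (hne : i ≠ j) (h : ¬ G.Adj i j) :
    applyG G f A i j = 0 := by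
  simp [applyG, hne, h]

lemma add_le_of_posSemidef_applyG {u v w : Fin n} (huw : G.Adj u w) (hwv : G.Adj w v)
    (huv : ¬ G.Adj u v) (hne : u ≠ v) (hB : (applyG G f A).PosSemidef) :
    f (A u w) + f (A w u) + f (A v w) + f (A w v) ≤ f (A u u) + f (A v v) + f (A w w) := by
  have h := hB.add_le_of_test_vector u v w
  rwa [applyG_apply_of_adj huw, applyG_apply_of_adj huw.symm, applyG_apply_of_adj hwv,
    applyG_apply_of_adj hwv.symm, applyG_apply_self, applyG_apply_self, applyG_apply_self,
    applyG_apply_of_not_adj hne huv, applyG_apply_of_not_adj hne.symm (huv ∘ G.adj_symm),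
    add_zero, add_zero] at h

end applyG

lemma SimpleGraph.Adj.adj_of_mem_pair {V : Type*} {G : SimpleGraph V} {u w a b : V}
    (h : G.Adj u w) (ha : a ∈ ({u, w} : Set V)) (hb : b ∈ ({u, w} : Set V)) (hab : a ≠ b) :
    G.Adj a b := by
  rcases ha with rfl | rfl <;> rcases hb with rfl | rfl
  exacts [absurd rfl hab, h, h.symm, absurd rfl hab]

lemma memPG_blockConst_add_blockConst {n : ℕ} {G : SimpleGraph (Fin n)} {I : Set ℝ}
    {u v w : Fin n} {x y : ℝ} (huw : G.Adj u w) (hvw : G.Adj v w) (h0 : 0 ∈ I) (hx : x ∈ I)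
    (hy : y ∈ I) (hxy : x + y ∈ I) (hx0 : 0 ≤ x) (hy0 : 0 ≤ y) :
    memPG G I (blockConst {u, w} x + blockConst {v, w} y) := by
  refine ⟨(posSemidef_blockConst _ hx0).add (posSemidef_blockConst _ hy0), fun a b ↦ ?_,
    fun a b hab hnadj ↦ ?_⟩
  · simp only [Matrix.add_apply, blockConst_apply]
    split_ifs <;> simpa
  · simp only [Matrix.add_apply, blockConst_apply]
    rw [if_neg fun h ↦ hnadj (huw.adj_of_mem_pair h.1 h.2 hab),
      if_neg fun h ↦ hnadj (hvw.adj_of_mem_pair h.1 h.2 hab), add_zero]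

theorem stmt9_general (I : Set ℝ) (h0 : (0 : ℝ) ∈ I)
    {n : ℕ} (G : SimpleGraph (Fin n)) (hGconn : G.Connected)
    (hGnc : ∃ i j : Fin n, i ≠ j ∧ ¬ G.Adj i j)
    (f : ℝ → ℝ)
    (hpres : ∀ A : Matrix (Fin n) (Fin n) ℝ, memPG G I A → memPG G Set.univ (applyG G f A)) :
    f 0 = 0 ∧
      ∀ x y : ℝ, x ∈ I ∩ Set.Ioi 0 → y ∈ I ∩ Set.Ioi 0 → x + y ∈ I ∩ Set.Ioi 0 →
        f x + f y ≤ f (x + y) := by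
  obtain ⟨i, j, hij, hnadj⟩ := hGnc
  obtain ⟨p, hp⟩ := hGconn.exists_walk_length_eq_dist i j
  obtain ⟨u, w, v, huw, hwv, huv, hne⟩ :=
    p.exists_adj_adj_not_adj_ne hp (hGconn.one_lt_dist_of_ne_of_not_adj hij hnadj)
  have hvw : v ≠ w := hwv.ne'
  have hzero : memPG G I 0 := ⟨.zero, fun _ _ ↦ h0, fun _ _ _ _ ↦ rfl⟩
  have hf0 : f 0 = 0 := by
    have h := add_le_of_posSemidef_applyG huw hwv huv hne (hpres 0 hzero).1
    have hdiag := (hpres 0 hzero).1.diag_nonneg (i := u)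
    simp only [Matrix.zero_apply, applyG_apply_self] at h hdiag
    linarith
  refine ⟨hf0, ?_⟩
  rintro x y ⟨hxI, hx⟩ ⟨hyI, hy⟩ ⟨hxyI, -⟩
  have hA := memPG_blockConst_add_blockConst huw hwv.symm h0 hxI hyI hxyI hx.le hy.le
  have h := add_le_of_posSemidef_applyG huw hwv huv hne (hpres _ hA).1
  simp only [Matrix.add_apply, blockConst_apply, Set.mem_insert_iff, Set.mem_singleton_iff,
    hne, hne.symm, huw.ne, huw.ne.symm, hvw, hvw.symm, or_true, or_false, or_self, and_self,
    and_true, and_false, ↓reduceIte, add_zero, zero_add] at h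
  linarith

theorem stmt9 (I : Set ℝ) (hI : I.OrdConnected) (h0 : (0 : ℝ) ∈ I)
    (hsup : sSup ((fun x : ℝ => (x : EReal)) '' I) ∉ (fun x : ℝ => (x : EReal)) '' I)
    (hinf : -sInf ((fun x : ℝ => (x : EReal)) '' I) ≤ sSup ((fun x : ℝ => (x : EReal)) '' I))
    {n : ℕ} (G : SimpleGraph (Fin n)) (hGconn : G.Connected)
    (hGnc : ∃ i j : Fin n, i ≠ j ∧ ¬ G.Adj i j)
    (f : ℝ → ℝ)
    (hpres : ∀ A : Matrix (Fin n) (Fin n) ℝ, memPG G I A → memPG G Set.univ (applyG G f A)) :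
    f 0 = 0 ∧
      ∀ x y : ℝ, x ∈ I ∩ Set.Ioi 0 → y ∈ I ∩ Set.Ioi 0 → x + y ∈ I ∩ Set.Ioi 0 →
        f x + f y ≤ f (x + y) :=
  stmt9_general I h0 G hGconn hGnc f hpres
end

section
/- Fix 1 < r < s < ∞, a measurable set B ⊆ (r,s), and a_r, a_s > 0. Let μ be a finite nonnegative measure on B with μ(B) > 0, and let h : B → ℝ be a bounded measurable function. Define f(x) = a_r x^r + a_s x^s + ∫_B h(β) x^β dμ(β) for x ≥ 0. Then there exists ν > 0 such that whenever h(β) > −ν for all β ∈ B, the function f is nonnegative and superadditive on [0,∞), i.e. f(x) ≥ 0 and f(x+y) ≥ f(x) + f(y) for all x, y ≥ 0. -/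
/-!
For `β ≥ 1` the superadditivity defect `D_β(x, y) = (x + y)^β - x^β - y^β` is nonnegative, and for
`β ∈ [r, s]` it is dominated uniformly: `D_β ≤ C (D_r + D_s)` with `C = s(s-1)/(r(r-1))`. Hence
`f(x+y) - f(x) - f(y) = a_r D_r + a_s D_s + ∫ h(β) D_β dμ ≥ (min(a_r, a_s) - ν C μ(B)) (D_r + D_s)`,
which is nonnegative once `ν` is small; nonnegativity of `f` is the same argument with
`x^β ≤ x^r + x^s` in place of the domination.

The domination is proved by comparing derivatives in `x`: `∂ₓ D_β = β ((x+y)^(β-1) - x^(β-1))`, and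
an increment `w^γ - t^γ` with `γ ∈ [p, q]` is controlled by the increments for `p` and `q`, again by
comparing derivatives, through `u^γ ≤ u^p + u^q`.
-/

open MeasureTheory

/-- The function `f(x) = a_r x^r + a_s x^s + ∫_B h(β) x^β dμ(β)`. -/
noncomputable def fMix (ar as r s : ℝ) (B : Set ℝ) (μ : Measure ℝ) (h : ℝ → ℝ) (x : ℝ) : ℝ :=
  ar * x ^ r + as * x ^ s + ∫ β in B, h β * x ^ β ∂μ

open Set

lemma rpow_le_rpow_add_rpow {x p q β : ℝ} (hx : 0 < x) (hpβ : p ≤ β) (hβq : β ≤ q) :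
    x ^ β ≤ x ^ p + x ^ q := by
  rcases le_total x 1 with hx1 | hx1
  · linarith [Real.rpow_le_rpow_of_exponent_ge hx hx1 hpβ, Real.rpow_nonneg hx.le q]
  · linarith [Real.rpow_le_rpow_of_exponent_le hx1 hβq, Real.rpow_nonneg hx.le p]

lemma rpow_le_rpow_add_rpow_of_nonneg {x p q β : ℝ} (hx : 0 ≤ x) (hp : 0 < p) (hpβ : p ≤ β)
    (hβq : β ≤ q) : x ^ β ≤ x ^ p + x ^ q := by
  rcases hx.eq_or_lt with rfl | hx
  · simp [Real.zero_rpow, (hp.trans_le hpβ).ne', hp.ne', (hp.trans_le (hpβ.trans hβq)).ne']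
  · exact rpow_le_rpow_add_rpow hx hpβ hβq

lemma sub_le_mul_sub_of_hasDerivAt_le {D : Set ℝ} (hD : Convex ℝ D) {f g f' g' : ℝ → ℝ}
    {K t w : ℝ} (hf : ContinuousOn f D) (hg : ContinuousOn g D)
    (hf' : ∀ u ∈ interior D, HasDerivAt f (f' u) u)
    (hg' : ∀ u ∈ interior D, HasDerivAt g (g' u) u)
    (hfg : ∀ u ∈ interior D, f' u ≤ K * g' u) (ht : t ∈ D) (hw : w ∈ D) (htw : t ≤ w) :
    f w - f t ≤ K * (g w - g t) := by
  have hmono : MonotoneOn (fun u => K * g u - f u) D :=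
    monotoneOn_of_hasDerivWithinAt_nonneg hD ((hg.const_smul K).sub hf)
      (fun u hu => (((hg' u hu).const_mul K).sub (hf' u hu)).hasDerivWithinAt)
      (fun u hu => sub_nonneg.2 (hfg u hu))
  linarith [hmono ht hw htw]

lemma rpow_sub_rpow_le {p q γ t w : ℝ} (hp : 0 < p) (hpγ : p ≤ γ) (hγq : γ ≤ q)
    (ht : 0 ≤ t) (htw : t ≤ w) :
    w ^ γ - t ^ γ ≤ q / p * ((w ^ p - t ^ p) + (w ^ q - t ^ q)) := by
  have hγ : 0 < γ := hp.trans_le hpγ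
  have hq : 0 < q := hγ.trans_le hγq
  have hderiv (a u : ℝ) (hu : 0 < u) : HasDerivAt (fun v : ℝ => v ^ a) (a * u ^ (a - 1)) u :=
    Real.hasDerivAt_rpow_const (Or.inl hu.ne')
  have key := sub_le_mul_sub_of_hasDerivAt_le (g := fun u => u ^ p + u ^ q) (K := q / p)
    (convex_Ici 0) (Real.continuous_rpow_const hγ.le).continuousOn
    ((Real.continuous_rpow_const hp.le).add (Real.continuous_rpow_const hq.le)).continuousOn
    (fun u hu => hderiv γ u (by simpa using hu))
    (fun u hu => (hderiv p u (by simpa using hu)).add (hderiv q u (by simpa using hu)))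
    (fun u hu => ?_) ht (ht.trans htw) htw
  · convert key using 2; ring
  rw [interior_Ici, mem_Ioi] at hu
  have hpow := rpow_le_rpow_add_rpow hu (by linarith : p - 1 ≤ γ - 1) (by linarith : γ - 1 ≤ q - 1)
  have hqp : q / p * p = q := div_mul_cancel₀ q hp.ne'
  have hqq : q ≤ q / p * q := le_mul_of_one_le_left hq.le ((one_le_div hp).2 (hpγ.trans hγq))
  have ha := Real.rpow_nonneg hu.le (p - 1)
  have hb := Real.rpow_nonneg hu.le (q - 1)
  calc γ * u ^ (γ - 1) ≤ γ * (u ^ (p - 1) + u ^ (q - 1)) := by gcongr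
    _ ≤ q / p * p * u ^ (p - 1) + q / p * q * u ^ (q - 1) := by
        rw [hqp, mul_add]; gcongr; linarith
    _ = q / p * (p * u ^ (p - 1) + q * u ^ (q - 1)) := by ring

noncomputable def rpowDefect (β x y : ℝ) : ℝ := (x + y) ^ β - x ^ β - y ^ β

lemma rpowDefect_nonneg {β x y : ℝ} (hβ : 1 ≤ β) (hx : 0 ≤ x) (hy : 0 ≤ y) :
    0 ≤ rpowDefect β x y := by
  have := Real.add_rpow_le_rpow_add hx hy hβ
  unfold rpowDefect
  linarith

lemma rpowDefect_zero_left {β : ℝ} (hβ : β ≠ 0) (y : ℝ) : rpowDefect β 0 y = 0 := by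
  simp [rpowDefect, Real.zero_rpow hβ]

lemma continuous_rpowDefect {β : ℝ} (hβ : 0 ≤ β) (y : ℝ) :
    Continuous fun x => rpowDefect β x y := by
  unfold rpowDefect
  fun_prop (disch := assumption)

lemma hasDerivAt_rpowDefect {β x y : ℝ} (hx : 0 < x) (hy : 0 ≤ y) :
    HasDerivAt (fun v => rpowDefect β v y) (β * ((x + y) ^ (β - 1) - x ^ (β - 1))) x := by
  have hshift : HasDerivAt (fun v : ℝ => (v + y) ^ β) (β * (x + y) ^ (β - 1)) x := by
    simpa [Function.comp_def] using
      (Real.hasDerivAt_rpow_const (p := β) (Or.inl (by positivity : x + y ≠ 0))).comp x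
        ((hasDerivAt_id x).add_const y)
  rw [mul_sub]
  exact (hshift.sub (Real.hasDerivAt_rpow_const (Or.inl hx.ne'))).sub_const _

lemma rpowDefect_le {r s β x y : ℝ} (hr : 1 < r) (hrβ : r ≤ β) (hβs : β ≤ s)
    (hx : 0 ≤ x) (hy : 0 ≤ y) :
    rpowDefect β x y ≤ s * (s - 1) / (r * (r - 1)) * (rpowDefect r x y + rpowDefect s x y) := by
  set C := s * (s - 1) / (r * (r - 1))
  have hCr : C * r = s * ((s - 1) / (r - 1)) := by
    simp only [C]; field_simp
  have hC : 0 ≤ C := by simp only [C]; apply div_nonneg <;> nlinarith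
  have key := sub_le_mul_sub_of_hasDerivAt_le (K := C) (convex_Ici 0)
    (continuous_rpowDefect (by linarith) y).continuousOn
    ((continuous_rpowDefect (by linarith) y).add
      (continuous_rpowDefect (by linarith) y)).continuousOn
    (fun u hu => hasDerivAt_rpowDefect (β := β) (by simpa using hu) hy)
    (fun u hu => (hasDerivAt_rpowDefect (β := r) (by simpa using hu) hy).add
      (hasDerivAt_rpowDefect (β := s) (by simpa using hu) hy))
    (fun u hu => ?_) (mem_Ici.2 le_rfl) hx hx
  · simpa [rpowDefect_zero_left (by linarith : β ≠ 0), rpowDefect_zero_left (by linarith : r ≠ 0),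
      rpowDefect_zero_left (by linarith : s ≠ 0)] using key
  rw [interior_Ici, mem_Ioi] at hu
  have huy : u ≤ u + y := by linarith
  have hincr (a : ℝ) (ha : 0 ≤ a) : 0 ≤ (u + y) ^ a - u ^ a :=
    sub_nonneg.2 (Real.rpow_le_rpow hu.le huy ha)
  have hX := hincr (β - 1) (by linarith)
  have hB := hincr (s - 1) (by linarith)
  have hinterp := rpow_sub_rpow_le (by linarith : 0 < r - 1) (by linarith : r - 1 ≤ β - 1)
    (by linarith : β - 1 ≤ s - 1) hu.le huy
  calc β * ((u + y) ^ (β - 1) - u ^ (β - 1)) ≤ s * ((u + y) ^ (β - 1) - u ^ (β - 1)) := by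
        gcongr
    _ ≤ C * r * (((u + y) ^ (r - 1) - u ^ (r - 1)) + ((u + y) ^ (s - 1) - u ^ (s - 1))) := by
        rw [hCr, mul_assoc]; gcongr; linarith
    _ ≤ C * (r * ((u + y) ^ (r - 1) - u ^ (r - 1)) + s * ((u + y) ^ (s - 1) - u ^ (s - 1))) := by
        rw [mul_assoc, mul_add]; gcongr; linarith

lemma integrableOn_mul_rpow {μ : Measure ℝ} [IsFiniteMeasure μ] {B : Set ℝ} {h : ℝ → ℝ}
    {r s M x : ℝ} (hB : MeasurableSet B) (hBsub : B ⊆ Icc r s) (hr : 0 < r) (hh : Measurable h)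
    (hM : ∀ β ∈ B, |h β| ≤ M) (hx : 0 ≤ x) :
    IntegrableOn (fun β => h β * x ^ β) B μ := by
  refine Measure.integrableOn_of_bounded (M := M * (x ^ r + x ^ s)) (measure_ne_top μ B)
    (hh.mul (measurable_const.pow measurable_id)).aestronglyMeasurable ?_
  filter_upwards [ae_restrict_mem hB] with β hβ
  rw [norm_mul, Real.norm_eq_abs, Real.norm_of_nonneg (Real.rpow_nonneg hx β)]
  exact mul_le_mul (hM β hβ) (rpow_le_rpow_add_rpow_of_nonneg hx hr (hBsub hβ).1 (hBsub hβ).2)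
    (Real.rpow_nonneg hx β) ((abs_nonneg _).trans (hM β hβ))

lemma neg_mul_le_setIntegral_mul {α : Type*} [MeasurableSpace α] {μ : Measure α}
    [IsFiniteMeasure μ] {B : Set α} {h g : α → ℝ} {ν M : ℝ} (hB : MeasurableSet B)
    (hint : IntegrableOn (fun a => h a * g a) B μ) (hν : 0 ≤ ν) (hh : ∀ a ∈ B, -ν ≤ h a)
    (hg : ∀ a ∈ B, 0 ≤ g a) (hgM : ∀ a ∈ B, g a ≤ M) :
    -(ν * M * μ.real B) ≤ ∫ a in B, h a * g a ∂μ := by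
  have hconst : ∫ _ in B, -(ν * M) ∂μ = -(ν * M * μ.real B) := by
    rw [setIntegral_const, smul_eq_mul]; ring
  rw [← hconst]
  refine setIntegral_mono_on (integrableOn_const (measure_ne_top μ B)) hint hB fun a ha => ?_
  calc -(ν * M) ≤ -ν * g a := by nlinarith [hgM a ha, hg a ha]
    _ ≤ h a * g a := mul_le_mul_of_nonneg_right (hh a ha) (hg a ha)

lemma fMix_add_sub_sub {ar as r s x y : ℝ} {B : Set ℝ} {μ : Measure ℝ} {h : ℝ → ℝ}
    (hx : IntegrableOn (fun β => h β * x ^ β) B μ) (hy : IntegrableOn (fun β => h β * y ^ β) B μ)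
    (hxy : IntegrableOn (fun β => h β * (x + y) ^ β) B μ) :
    fMix ar as r s B μ h (x + y) - fMix ar as r s B μ h x - fMix ar as r s B μ h y =
      ar * rpowDefect r x y + as * rpowDefect s x y + ∫ β in B, h β * rpowDefect β x y ∂μ := by
  simp only [fMix, rpowDefect, mul_sub]
  rw [integral_sub (f := fun β => h β * (x + y) ^ β - h β * x ^ β) (hxy.sub hx) hy,
    integral_sub hxy hx]
  ring

lemma fMix_nonneg {ar as r s ν x : ℝ} {B : Set ℝ} {μ : Measure ℝ} [IsFiniteMeasure μ]
    {h : ℝ → ℝ} (hB : MeasurableSet B) (hBsub : B ⊆ Icc r s) (hr : 0 < r)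
    (hint : IntegrableOn (fun β => h β * x ^ β) B μ) (hν : 0 ≤ ν)
    (hνμ : ν * μ.real B ≤ min ar as) (hh : ∀ β ∈ B, -ν ≤ h β) (hx : 0 ≤ x) :
    0 ≤ fMix ar as r s B μ h x := by
  have hI := neg_mul_le_setIntegral_mul hB hint hν hh (fun β _ => Real.rpow_nonneg hx β)
    fun β hβ => rpow_le_rpow_add_rpow_of_nonneg hx hr (hBsub hβ).1 (hBsub hβ).2
  have hxr := Real.rpow_nonneg hx r
  have hxs := Real.rpow_nonneg hx s
  have har := mul_le_mul_of_nonneg_right (hνμ.trans (min_le_left ar as)) hxr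
  have has := mul_le_mul_of_nonneg_right (hνμ.trans (min_le_right ar as)) hxs
  unfold fMix
  linarith

lemma fMix_add_le {ar as r s ν x y : ℝ} {B : Set ℝ} {μ : Measure ℝ} [IsFiniteMeasure μ]
    {h : ℝ → ℝ} (hB : MeasurableSet B) (hBsub : B ⊆ Icc r s) (hr : 1 < r) (hrs : r ≤ s)
    (hint : ∀ x, 0 ≤ x → IntegrableOn (fun β => h β * x ^ β) B μ) (hν : 0 ≤ ν)
    (hνμ : ν * (s * (s - 1) / (r * (r - 1))) * μ.real B ≤ min ar as)
    (hh : ∀ β ∈ B, -ν ≤ h β) (hx : 0 ≤ x) (hy : 0 ≤ y) :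
    fMix ar as r s B μ h x + fMix ar as r s B μ h y ≤ fMix ar as r s B μ h (x + y) := by
  have hintD : IntegrableOn (fun β => h β * rpowDefect β x y) B μ :=
    (((hint _ (add_nonneg hx hy)).sub (hint x hx)).sub (hint y hy)).congr_fun
      (fun β _ => by simp only [rpowDefect, Pi.sub_apply]; ring) hB
  have hI := neg_mul_le_setIntegral_mul hB hintD hν hh
    (fun β hβ => rpowDefect_nonneg (hr.trans_le (hBsub hβ).1).le hx hy)
    fun β hβ => rpowDefect_le hr (hBsub hβ).1 (hBsub hβ).2 hx hy
  have hDr := rpowDefect_nonneg hr.le hx hy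
  have hDs := rpowDefect_nonneg (hr.trans_le hrs).le hx hy
  have har := mul_le_mul_of_nonneg_right (hνμ.trans (min_le_left ar as)) hDr
  have has := mul_le_mul_of_nonneg_right (hνμ.trans (min_le_right ar as)) hDs
  linarith [fMix_add_sub_sub (ar := ar) (as := as) (r := r) (s := s) (hint x hx) (hint y hy)
    (hint _ (add_nonneg hx hy))]

theorem stmt12_general (r s : ℝ) (hr : 1 < r) (hrs : r < s)
    (B : Set ℝ) (hBmeas : MeasurableSet B) (hBsub : B ⊆ Set.Ioo r s)
    (ar as : ℝ) (har : 0 < ar) (has : 0 < as)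
    (μ : Measure ℝ) [IsFiniteMeasure μ]
    (h : ℝ → ℝ) (hmeas : Measurable h) (hbd : ∃ C : ℝ, ∀ β ∈ B, |h β| ≤ C) :
    ∃ ν > (0 : ℝ), (∀ β ∈ B, -ν < h β) →
      (∀ x : ℝ, 0 ≤ x → 0 ≤ fMix ar as r s B μ h x) ∧
      (∀ x y : ℝ, 0 ≤ x → 0 ≤ y →
        fMix ar as r s B μ h x + fMix ar as r s B μ h y ≤ fMix ar as r s B μ h (x + y)) := by
  obtain ⟨M, hM⟩ := hbd
  have hBIcc : B ⊆ Icc r s := hBsub.trans Ioo_subset_Icc_self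
  have hint (x : ℝ) (hx : 0 ≤ x) : IntegrableOn (fun β => h β * x ^ β) B μ :=
    integrableOn_mul_rpow hBmeas hBIcc (by linarith) hmeas hM hx
  set C := s * (s - 1) / (r * (r - 1))
  have hC : 1 ≤ C := by
    rw [le_div_iff₀ (by nlinarith), one_mul]; nlinarith
  set m := μ.real B
  have hm : 0 ≤ m := measureReal_nonneg
  set ν := min ar as / (C * (m + 1))
  have hν : 0 < ν := by positivity
  have hνCm : ν * C * m ≤ min ar as :=
    calc ν * C * m = min ar as * (m / (m + 1)) := by simp only [ν]; field_simp
      _ ≤ min ar as := mul_le_of_le_one_right (le_min har.le has.le)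
          ((div_le_one (by linarith)).2 (by linarith))
  have hνm : ν * m ≤ min ar as := le_trans (by nlinarith [mul_nonneg hν.le hm]) hνCm
  refine ⟨ν, hν, fun hh => ⟨fun x hx => ?_, fun x y hx hy => ?_⟩⟩
  · exact fMix_nonneg hBmeas hBIcc (by linarith) (hint x hx) hν.le hνm
      (fun β hβ => (hh β hβ).le) hx
  · exact fMix_add_le hBmeas hBIcc hr hrs.le hint hν.le hνCm (fun β hβ => (hh β hβ).le) hx hy

theorem stmt12 (r s : ℝ) (hr : 1 < r) (hrs : r < s)
    (B : Set ℝ) (hBmeas : MeasurableSet B) (hBsub : B ⊆ Set.Ioo r s)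
    (ar as : ℝ) (har : 0 < ar) (has : 0 < as)
    (μ : Measure ℝ) [IsFiniteMeasure μ] (hμB : 0 < μ B)
    (h : ℝ → ℝ) (hmeas : Measurable h) (hbd : ∃ C : ℝ, ∀ β ∈ B, |h β| ≤ C) :
    ∃ ν > (0 : ℝ), (∀ β ∈ B, -ν < h β) →
      (∀ x : ℝ, 0 ≤ x → 0 ≤ fMix ar as r s B μ h x) ∧
      (∀ x y : ℝ, 0 ≤ x → 0 ≤ y →
        fMix ar as r s B μ h x + fMix ar as r s B μ h y ≤ fMix ar as r s B μ h (x + y)) :=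
  stmt12_general r s hr hrs B hBmeas hBsub ar as har has μ h hmeas hbd
end

section
/- Let p(x) = Σ_{k=0}^n a_k x^k be a real polynomial of degree n ≥ 3 such that p(x) > 0 for every x > 0 and p(√(xy))² ≤ p(x)·p(y) for all x, y ∈ (0,∞). Then a_0 ≥ 0, a_1 ≥ 0, a_{n−1} ≥ 0, and a_n ≥ 0. -/
/-!
Write `p(x) = ∑ aₖ xᵏ`, so `p(0) = a₀` and `p'(0) = a₁`; `a₀ ≥ 0` follows from positivity on
`(0, ∞)` by continuity. If `a₀ = 0`, then `p` has a one-sided minimum at `0`, so `a₁ ≥ 0`.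
If `a₀ > 0`, the hypothesis at `x = 2t`, `y = t/2` says that `G(t) = p(2t) p(t/2) - p(t)²` is
nonnegative for `t > 0`, while `G(0) = 0` and `G'(0) = a₀ a₁ / 2`; hence again `a₁ ≥ 0`.
The reversed polynomial `xⁿ p(1/x)`, with coefficients `aₙ₋ₖ`, satisfies the same hypotheses,
which gives `aₙ ≥ 0` and `aₙ₋₁ ≥ 0`.
-/

open Finset Filter Topology

theorem ContinuousAt.nonneg_of_forall_gt_pos {f : ℝ → ℝ} {x : ℝ} (hf : ContinuousAt f x)
    (hpos : ∀ t, x < t → 0 < f t) : 0 ≤ f x :=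
  ge_of_tendsto (hf.tendsto.mono_left (nhdsWithin_le_nhds (s := Set.Ioi x)))
    (by filter_upwards [self_mem_nhdsWithin] with t ht using (hpos t ht).le)

theorem HasDerivAt.nonneg_of_forall_gt_le {g : ℝ → ℝ} {d x : ℝ} (hg : HasDerivAt g d x)
    (hmin : ∀ t, x < t → g x ≤ g t) : 0 ≤ d := by
  refine ge_of_tendsto (hg.tendsto_slope.mono_left (nhdsGT_le_nhdsNE x)) ?_
  filter_upwards [self_mem_nhdsWithin] with t ht
  rw [slope_def_field]
  exact div_nonneg (sub_nonneg.2 (hmin t ht)) (sub_nonneg.2 (le_of_lt ht))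

theorem HasDerivAt.nonneg_of_sq_sqrt_le_mul {f : ℝ → ℝ} {d : ℝ} (hf : HasDerivAt f d 0)
    (hpos : ∀ x, 0 < x → 0 < f x)
    (hlc : ∀ x y, 0 < x → 0 < y → f (√(x * y)) ^ 2 ≤ f x * f y) : 0 ≤ d := by
  rcases (hf.continuousAt.nonneg_of_forall_gt_pos hpos).eq_or_lt with hf0 | hf0
  · exact hf.nonneg_of_forall_gt_le fun t ht => hf0 ▸ (hpos t ht).le
  have h2 : HasDerivAt (fun t => f (2 * t)) (d * 2) 0 :=
    hf.comp_of_eq 0 ((hasDerivAt_id 0).const_mul 2 |>.congr_deriv (mul_one 2)) (mul_zero 2).symm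
  have h3 : HasDerivAt (fun t => f (t / 2)) (d * (1 / 2)) 0 :=
    hf.comp_of_eq 0 ((hasDerivAt_id 0).div_const 2) (zero_div 2).symm
  have hG : HasDerivAt (fun t => f (2 * t) * f (t / 2) - f t ^ 2) (f 0 * d / 2) 0 := by
    refine ((h2.mul h3).sub (hf.pow 2)).congr_deriv ?_
    simp only [mul_zero, zero_div]
    ring
  have hGd := hG.nonneg_of_forall_gt_le fun t ht => by
    have h := hlc (2 * t) (t / 2) (by linarith) (by linarith)
    rw [show 2 * t * (t / 2) = t ^ 2 by ring, Real.sqrt_sq ht.le] at h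
    simp only [mul_zero, zero_div, ← sq, sub_self, sub_nonneg]
    exact h
  exact (mul_nonneg_iff_of_pos_left hf0).1 (by linarith)

theorem pow_mul_inv_sq_sqrt_le_mul {f : ℝ → ℝ} (n : ℕ)
    (hlc : ∀ x y, 0 < x → 0 < y → f (√(x * y)) ^ 2 ≤ f x * f y) {x y : ℝ} (hx : 0 < x)
    (hy : 0 < y) :
    (√(x * y) ^ n * f (√(x * y))⁻¹) ^ 2 ≤ x ^ n * f x⁻¹ * (y ^ n * f y⁻¹) := by
  have hxy : 0 ≤ x * y := by positivity
  have h := hlc x⁻¹ y⁻¹ (inv_pos.2 hx) (inv_pos.2 hy)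
  rw [← mul_inv, Real.sqrt_inv] at h
  calc (√(x * y) ^ n * f (√(x * y))⁻¹) ^ 2 = (x * y) ^ n * f (√(x * y))⁻¹ ^ 2 := by
        rw [mul_pow, ← pow_mul, mul_comm n, pow_mul, Real.sq_sqrt hxy]
    _ ≤ (x * y) ^ n * (f x⁻¹ * f y⁻¹) := by gcongr
    _ = x ^ n * f x⁻¹ * (y ^ n * f y⁻¹) := by ring

theorem sum_range_reflect_mul_pow (a : ℕ → ℝ) (n : ℕ) {x : ℝ} (hx : x ≠ 0) :
    ∑ k ∈ range (n + 1), a (n - k) * x ^ k = x ^ n * ∑ k ∈ range (n + 1), a k * x⁻¹ ^ k := by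
  rw [mul_sum, ← sum_range_reflect]
  refine sum_congr rfl fun k hk => ?_
  have hk : k ≤ n := Nat.lt_succ_iff.1 (mem_range.1 hk)
  rw [add_tsub_cancel_right, Nat.sub_sub_self hk, inv_pow, pow_sub₀ _ hx hk]
  ring

theorem hasDerivAt_sum_mul_pow_zero (a : ℕ → ℝ) {n : ℕ} (hn : 1 ≤ n) :
    HasDerivAt (fun x => ∑ k ∈ range (n + 1), a k * x ^ k) (a 1) 0 := by
  refine (HasDerivAt.fun_sum fun k _ => (hasDerivAt_pow k (0 : ℝ)).const_mul (a k)).congr_deriv ?_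
  rw [sum_eq_single_of_mem 1 (mem_range.2 (by omega))]
  · simp
  · intro k _ hk
    rcases k with _ | _ | k <;> simp_all

theorem sum_mul_zero_pow (a : ℕ → ℝ) (n : ℕ) : ∑ k ∈ range (n + 1), a k * 0 ^ k = a 0 := by
  simp [sum_range_succ']

theorem coeff_zero_one_nonneg_of_sq_sqrt_le_mul (n : ℕ) (hn : 1 ≤ n)
    (a : ℕ → ℝ) (hpos : ∀ x : ℝ, 0 < x → 0 < ∑ k ∈ range (n + 1), a k * x ^ k)
    (hlc : ∀ x y : ℝ, 0 < x → 0 < y →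
      (∑ k ∈ range (n + 1), a k * √(x * y) ^ k) ^ 2 ≤
        (∑ k ∈ range (n + 1), a k * x ^ k) * (∑ k ∈ range (n + 1), a k * y ^ k)) :
    0 ≤ a 0 ∧ 0 ≤ a 1 := by
  have hp := hasDerivAt_sum_mul_pow_zero a hn
  refine ⟨?_, hp.nonneg_of_sq_sqrt_le_mul hpos hlc⟩
  simpa [sum_mul_zero_pow] using hp.continuousAt.nonneg_of_forall_gt_pos hpos

theorem stmt15_general (n : ℕ) (hn : 3 ≤ n) (a : ℕ → ℝ)
    (hpos : ∀ x : ℝ, 0 < x → 0 < ∑ k ∈ Finset.range (n + 1), a k * x ^ k)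
    (hlc : ∀ x y : ℝ, 0 < x → 0 < y →
      (∑ k ∈ Finset.range (n + 1), a k * Real.sqrt (x * y) ^ k) ^ 2 ≤
        (∑ k ∈ Finset.range (n + 1), a k * x ^ k) *
          (∑ k ∈ Finset.range (n + 1), a k * y ^ k)) :
    0 ≤ a 0 ∧ 0 ≤ a 1 ∧ 0 ≤ a (n - 1) ∧ 0 ≤ a n := by
  obtain ⟨h0, h1⟩ := coeff_zero_one_nonneg_of_sq_sqrt_le_mul n (by omega) a hpos hlc
  have hrev := fun x (hx : 0 < x) => sum_range_reflect_mul_pow a n hx.ne'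
  obtain ⟨hn0, hn1⟩ := coeff_zero_one_nonneg_of_sq_sqrt_le_mul n (by omega)
    (fun k => a (n - k))
    (fun x hx => by rw [hrev x hx]; exact mul_pos (pow_pos hx n) (hpos _ (inv_pos.2 hx)))
    (fun x y hx hy => by
      rw [hrev x hx, hrev y hy, hrev _ (Real.sqrt_pos.2 (mul_pos hx hy))]
      exact pow_mul_inv_sq_sqrt_le_mul (f := fun x => ∑ k ∈ range (n + 1), a k * x ^ k)
        n hlc hx hy)
  exact ⟨h0, h1, hn1, by simpa using hn0⟩

theorem stmt15 (n : ℕ) (hn : 3 ≤ n) (a : ℕ → ℝ) (han : a n ≠ 0)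
    (hpos : ∀ x : ℝ, 0 < x → 0 < ∑ k ∈ Finset.range (n + 1), a k * x ^ k)
    (hlc : ∀ x y : ℝ, 0 < x → 0 < y →
      (∑ k ∈ Finset.range (n + 1), a k * Real.sqrt (x * y) ^ k) ^ 2 ≤
        (∑ k ∈ Finset.range (n + 1), a k * x ^ k) *
          (∑ k ∈ Finset.range (n + 1), a k * y ^ k)) :
    0 ≤ a 0 ∧ 0 ≤ a 1 ∧ 0 ≤ a (n - 1) ∧ 0 ≤ a n :=
  stmt15_general n hn a hpos hlc
end

section
/- For every n ≥ 2, there exists an n×n real positive semidefinite matrix A such that N_k(A) ≠ ∅ for every k = 1, …, n−1. -/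
open Matrix
open scoped Classical

/-- The `m`-th entrywise (Hadamard) power of `A`; for `m = 0` it is the matrix
whose `(i,j)` entry is `1` if `A i j ≠ 0` and `0` if `A i j = 0`. -/
noncomputable def hadPow {n : ℕ} (A : Matrix (Fin n) (Fin n) ℝ) (m : ℕ) :
    Matrix (Fin n) (Fin n) ℝ :=
  if m = 0 then Matrix.of (fun i j => if A i j = 0 then 0 else 1)
  else Matrix.of (fun i j => A i j ^ m)

/-- `N_k(A)`: vectors `β` with `βᵀ A^{∘m} β = 0` for all `0 ≤ m ≤ k−1`
and `βᵀ A^{∘k} β > 0`. -/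
noncomputable def Nset {n : ℕ} (A : Matrix (Fin n) (Fin n) ℝ) (k : ℕ) : Set (Fin n → ℝ) :=
  {β | (∀ m < k, β ⬝ᵥ (hadPow A m).mulVec β = 0) ∧ 0 < β ⬝ᵥ (hadPow A k).mulVec β}

/-!
Take the rank-one matrix `A = u uᵀ` with `u i = 1 + i`. Its entries never vanish, so every
Hadamard power, including the zeroth, is again rank one: `A^{∘m} = u^m (u^m)ᵀ`, and
`βᵀ A^{∘m} β = (u^m ⬝ᵥ β)²`. With `β` the weights of the `k`-th forward difference,
`u^m ⬝ᵥ β = Δ^k (x ↦ x^m) (1)`, which vanishes for `m < k` and equals `k!` for `m = k`.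
-/

open Finset

lemma dotProduct_vecMulVec_self_mulVec {ι R : Type*} [Fintype ι] [CommRing R] (w β : ι → R) :
    β ⬝ᵥ (vecMulVec w w *ᵥ β) = (w ⬝ᵥ β) ^ 2 := by
  rw [dotProduct_mulVec, vecMul_vecMulVec, smul_dotProduct, smul_eq_mul, dotProduct_comm β, sq]

lemma hadPow_vecMulVec_self {n : ℕ} {u : Fin n → ℝ} (hu : ∀ i, u i ≠ 0) (m : ℕ) :
    hadPow (vecMulVec u u) m = vecMulVec (u ^ m) (u ^ m) := by
  ext i j
  rcases eq_or_ne m 0 with rfl | hm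
  · simp [hadPow, vecMulVec_apply, hu i, hu j]
  · simp [hadPow, hm, vecMulVec_apply, mul_pow]

lemma mem_Nset_vecMulVec_self {n k : ℕ} {u β : Fin n → ℝ} (hu : ∀ i, u i ≠ 0)
    (hlt : ∀ m < k, u ^ m ⬝ᵥ β = 0) (hk : u ^ k ⬝ᵥ β ≠ 0) :
    β ∈ Nset (vecMulVec u u) k := by
  simp only [Nset, Set.mem_ofPred_eq, hadPow_vecMulVec_self hu, dotProduct_vecMulVec_self_mulVec]
  exact ⟨fun m hm => by rw [hlt m hm, sq, mul_zero], sq_pos_iff.mpr hk⟩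

lemma fwdDiff_iter_eq_sum_fin_shift {R : Type*} [CommRing R] {n k : ℕ} (hk : k < n)
    (f : R → R) (y : R) :
    (fwdDiff 1)^[k] f y = ∑ i : Fin n, f (y + i) * ((-1) ^ (k - i) * k.choose i) := by
  have hvanish : ∀ i ∈ Ico (k + 1) n, f (y + i) * ((-1) ^ (k - i) * k.choose i) = 0 :=
    fun i hi => by simp [Nat.choose_eq_zero_of_lt (mem_Ico.mp hi).1]
  rw [fwdDiff_iter_eq_sum_shift,
    Fin.sum_univ_eq_sum_range (fun i => f (y + i) * ((-1) ^ (k - i) * k.choose i)),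
    ← sum_range_add_sum_Ico _ hk, sum_eq_zero hvanish, add_zero]
  refine sum_congr rfl fun i _ => ?_
  simp [zsmul_eq_mul, mul_comm]

theorem stmt16_general (n : ℕ) :
    ∃ A : Matrix (Fin n) (Fin n) ℝ, A.PosSemidef ∧
      ∀ k : ℕ, 1 ≤ k → k ≤ n - 1 → (Nset A k).Nonempty := by
  set u : Fin n → ℝ := fun i => 1 + i
  have hu : ∀ i, u i ≠ 0 := fun i => by positivity
  refine ⟨vecMulVec u u, by simpa using posSemidef_vecMulVec_self_star u, fun k hk hkn => ?_⟩
  set β : Fin n → ℝ := fun i => (-1) ^ (k - i) * k.choose i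
  have hpow : ∀ m, u ^ m ⬝ᵥ β = (fwdDiff 1)^[k] (· ^ m) 1 :=
    fun m => (fwdDiff_iter_eq_sum_fin_shift (by omega) (· ^ m) 1).symm
  refine ⟨β, mem_Nset_vecMulVec_self hu (fun m hm => ?_) ?_⟩
  · rw [hpow, fwdDiff_iter_pow_eq_zero_of_lt hm, Pi.zero_apply]
  · rw [hpow, fwdDiff_iter_eq_factorial, Pi.natCast_apply]
    exact_mod_cast k.factorial_ne_zero

theorem stmt16 (n : ℕ) (hn : 2 ≤ n) :
    ∃ A : Matrix (Fin n) (Fin n) ℝ, A.PosSemidef ∧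
      ∀ k : ℕ, 1 ≤ k → k ≤ n - 1 → (Nset A k).Nonempty :=
  stmt16_general n
end

section
/- Let G be a star graph with at least two vertices (i.e. a tree with a vertex adjacent to all other vertices). Then for every positive semidefinite A ∈ P_G and every integer k > 2, the set N_k(A) is empty. Moreover, for every such A, ker Q_A ∩ ker Q_{A∘A} = ∩_{m ≥ 1} ker Q_{A^{∘m}}, where ker Q_M := {β : βᵀ M β = 0}. -/
open Matrix
open scoped Classical

/-!
By the Schur product theorem `A` and `A ∘ A` are positive semidefinite, so `β` is isotropic for
both quadratic forms iff `A β = 0` and `(A ∘ A) β = 0`. On a star with centre `c`, the row of a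
leaf `i` with `A i c ≠ 0` then forces `β i = -β c` and, when `β c ≠ 0`, `A i i = A i c ≥ 0`. The
centre row gives `A c c = ∑ A i c` and `A c c ^ 2 = ∑ A i c ^ 2`, which for nonnegative summands
means that at most one leaf term is nonzero; hence `A^{∘m} β = 0` for every `m ≥ 1`.
-/

theorem Finset.sum_pow_eq_sum_pow_of_sq_sum_eq_sum_sq {ι R : Type*} [CommRing R] [LinearOrder R]
    [IsStrictOrderedRing R] [DecidableEq ι] (s : Finset ι) {b : ι → R}
    (hb : ∀ i ∈ s, 0 ≤ b i) (hsq : (∑ i ∈ s, b i) ^ 2 = ∑ i ∈ s, b i ^ 2) {m : ℕ} (hm : m ≠ 0) :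
    (∑ i ∈ s, b i) ^ m = ∑ i ∈ s, b i ^ m := by
  induction s using Finset.induction_on with
  | empty => simp [zero_pow hm]
  | insert j s hj ih =>
    rw [Finset.sum_insert hj, Finset.sum_insert hj] at hsq ⊢
    have hbj : 0 ≤ b j := hb j (Finset.mem_insert_self j s)
    have hbs : ∀ i ∈ s, 0 ≤ b i := fun i hi => hb i (Finset.mem_insert_of_mem hi)
    have hS : 0 ≤ ∑ i ∈ s, b i := Finset.sum_nonneg hbs
    have hle : ∑ i ∈ s, b i ^ 2 ≤ (∑ i ∈ s, b i) ^ 2 := Finset.sum_sq_le_sq_sum_of_nonneg hbs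
    have hcross : b j * ∑ i ∈ s, b i = 0 := by nlinarith [mul_nonneg hbj hS]
    rw [← ih hbs (by nlinarith [mul_nonneg hbj hS])]
    rcases mul_eq_zero.mp hcross with h | h <;> simp [h, zero_pow hm]

open scoped ComplexOrder in
theorem Matrix.PosSemidef.apply_eq_zero_of_diag_eq_zero_s18 {𝕜 ι : Type*} [RCLike 𝕜] [Fintype ι]
    [DecidableEq ι] {A : Matrix ι ι 𝕜} (hA : A.PosSemidef) {i : ι} (hi : A i i = 0) (j : ι) :
    A i j = 0 := by
  have hker : A *ᵥ Pi.single i 1 = 0 :=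
    (hA.dotProduct_mulVec_zero_iff _).mp (by simp [hi])
  rw [← hA.isHermitian.apply]
  simpa [mulVec_single_one] using congrFun hker j

theorem Matrix.PosSemidef.dotProduct_mulVec_self_eq_zero_iff {ι : Type*} [Fintype ι]
    {M : Matrix ι ι ℝ} (hM : M.PosSemidef) (x : ι → ℝ) : x ⬝ᵥ M *ᵥ x = 0 ↔ M *ᵥ x = 0 := by
  simpa using hM.dotProduct_mulVec_zero_iff x

theorem eq_neg_and_of_mul_add_mul_eq_zero {a b x t : ℝ} (hab : a = 0 → b = 0) (hb : b ≠ 0)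
    (h1 : a * x + b * t = 0) (h2 : a ^ 2 * x + b ^ 2 * t = 0) : x = -t ∧ (t = 0 ∨ a = b) := by
  have hprod : b * t * (a - b) = 0 := by linear_combination a * h1 - h2
  rcases mul_eq_zero.mp hprod with hbt | hab'
  · obtain rfl : t = 0 := (mul_eq_zero.mp hbt).resolve_left hb
    have hx : x = 0 := by simpa [mt hab hb] using h1
    simp [hx]
  · obtain rfl : a = b := sub_eq_zero.mp hab'
    have hxt : a * (x + t) = 0 := by linear_combination h1
    exact ⟨by simpa [hb, add_eq_zero_iff_eq_neg] using hxt, Or.inr rfl⟩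

theorem pow_mul_add_pow_mul_eq_zero {a b x t : ℝ} (hab : a = 0 → b = 0)
    (h1 : a * x + b * t = 0) (h2 : a ^ 2 * x + b ^ 2 * t = 0) {m : ℕ} (hm : m ≠ 0) :
    a ^ m * x + b ^ m * t = 0 := by
  by_cases hb : b = 0
  · obtain ⟨k, rfl⟩ := Nat.exists_eq_succ_of_ne_zero hm
    subst hb
    rw [zero_pow hm, pow_succ]
    linear_combination a ^ k * h1
  obtain ⟨rfl, ht | rfl⟩ := eq_neg_and_of_mul_add_mul_eq_zero hab hb h1 h2
  · simp [ht]
  · ring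

def SupportedOnStar {n : ℕ} (A : Matrix (Fin n) (Fin n) ℝ) (c : Fin n) : Prop :=
  ∀ i j, i ≠ j → i ≠ c → j ≠ c → A i j = 0

section hadPow

variable {n : ℕ} {A : Matrix (Fin n) (Fin n) ℝ} {m : ℕ}

theorem hadPow_apply_of_ne_zero (hm : m ≠ 0) (i j : Fin n) : hadPow A m i j = A i j ^ m := by
  simp [hadPow, hm]

theorem hadPow_one : hadPow A 1 = A := by
  ext i j
  simp [hadPow_apply_of_ne_zero]

theorem hadPow_two : hadPow A 2 = A ⊙ A := by
  ext i j
  simp [hadPow_apply_of_ne_zero, sq]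

theorem hadPow_mulVec_apply_of_ne {c : Fin n} (hstar : SupportedOnStar A c) (hm : m ≠ 0)
    (β : Fin n → ℝ) {i : Fin n} (hi : i ≠ c) :
    (hadPow A m *ᵥ β) i = A i i ^ m * β i + A i c ^ m * β c := by
  simp only [mulVec, dotProduct, hadPow_apply_of_ne_zero hm]
  refine Fintype.sum_eq_add i c hi fun j ⟨hji, hjc⟩ => ?_
  rw [hstar i j (Ne.symm hji) hi hjc, zero_pow hm, zero_mul]

theorem hadPow_mulVec_apply_self (hA : A.IsSymm) (hm : m ≠ 0) (β : Fin n → ℝ) (c : Fin n) :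
    (hadPow A m *ᵥ β) c = A c c ^ m * β c + ∑ i ∈ Finset.univ.erase c, A i c ^ m * β i := by
  simp only [mulVec, dotProduct, hadPow_apply_of_ne_zero hm, hA.apply c]
  exact (Finset.add_sum_erase _ _ (Finset.mem_univ c)).symm

end hadPow

section star

variable {n : ℕ} {A : Matrix (Fin n) (Fin n) ℝ} {c : Fin n} {β : Fin n → ℝ} {m : ℕ}

theorem hadPow_mulVec_apply_self_eq_mul (hA : A.IsSymm) (hm : m ≠ 0)
    (hleaf : ∀ i ∈ Finset.univ.erase c, A i c ≠ 0 → β i = -β c) :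
    (hadPow A m *ᵥ β) c = β c * (A c c ^ m - ∑ i ∈ Finset.univ.erase c, A i c ^ m) := by
  have hterm : ∀ i ∈ Finset.univ.erase c, A i c ^ m * β i = -(β c * A i c ^ m) := fun i hi => by
    by_cases hb : A i c = 0
    · simp [hb, zero_pow hm]
    · rw [hleaf i hi hb]
      ring
  rw [hadPow_mulVec_apply_self hA hm, Finset.sum_congr rfl hterm, Finset.sum_neg_distrib,
    ← Finset.mul_sum]
  ring

theorem hadPow_mulVec_eq_zero_of_supportedOnStar (hA : A.PosSemidef) (hstar : SupportedOnStar A c)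
    (h1 : hadPow A 1 *ᵥ β = 0) (h2 : hadPow A 2 *ᵥ β = 0) (hm : m ≠ 0) :
    hadPow A m *ᵥ β = 0 := by
  have hsym : A.IsSymm := by simpa using hA.isHermitian
  have hrow1 {i : Fin n} (hi : i ≠ c) : A i i * β i + A i c * β c = 0 := by
    simpa [hadPow_mulVec_apply_of_ne hstar one_ne_zero β hi] using congrFun h1 i
  have hrow2 {i : Fin n} (hi : i ≠ c) : A i i ^ 2 * β i + A i c ^ 2 * β c = 0 := by
    simpa [hadPow_mulVec_apply_of_ne hstar two_ne_zero β hi] using congrFun h2 i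
  have hdiag (i : Fin n) : A i i = 0 → A i c = 0 := (hA.apply_eq_zero_of_diag_eq_zero_s18 · c)
  have hleaf {i : Fin n} (hi : i ∈ Finset.univ.erase c) (hb : A i c ≠ 0) :
      β i = -β c ∧ (β c = 0 ∨ A i i = A i c) :=
    have hic := Finset.ne_of_mem_erase hi
    eq_neg_and_of_mul_add_mul_eq_zero (hdiag i) hb (hrow1 hic) (hrow2 hic)
  have hcentre {k : ℕ} (hk : k ≠ 0) :
      (hadPow A k *ᵥ β) c = β c * (A c c ^ k - ∑ i ∈ Finset.univ.erase c, A i c ^ k) :=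
    hadPow_mulVec_apply_self_eq_mul hsym hk fun i hi hb => (hleaf hi hb).1
  ext i
  rcases eq_or_ne i c with rfl | hi
  · rw [hcentre hm, Pi.zero_apply, mul_eq_zero]
    refine or_iff_not_imp_left.mpr fun ht => ?_
    have hsum : A i i = ∑ j ∈ Finset.univ.erase i, A j i := by
      simpa [ht, sub_eq_zero] using (hcentre one_ne_zero).symm.trans (congrFun h1 i)
    have hsq : A i i ^ 2 = ∑ j ∈ Finset.univ.erase i, A j i ^ 2 := by
      simpa [ht, sub_eq_zero] using (hcentre two_ne_zero).symm.trans (congrFun h2 i)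
    have hnonneg : ∀ j ∈ Finset.univ.erase i, 0 ≤ A j i := fun j hj => by
      by_cases hb : A j i = 0
      · exact hb.ge
      · exact (hleaf hj hb).2.resolve_left ht ▸ hA.diag_nonneg
    rw [hsum, Finset.sum_pow_eq_sum_pow_of_sq_sum_eq_sum_sq _ hnonneg (hsum ▸ hsq) hm, sub_self]
  · rw [hadPow_mulVec_apply_of_ne hstar hm β hi, Pi.zero_apply]
    exact pow_mul_add_pow_mul_eq_zero (hdiag i) (hrow1 hi) (hrow2 hi) hm

theorem dotProduct_hadPow_mulVec_eq_zero_of_supportedOnStar (hA : A.PosSemidef)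
    (hstar : SupportedOnStar A c) (h1 : β ⬝ᵥ hadPow A 1 *ᵥ β = 0)
    (h2 : β ⬝ᵥ hadPow A 2 *ᵥ β = 0) (hm : m ≠ 0) : β ⬝ᵥ hadPow A m *ᵥ β = 0 := by
  have hA1 : (hadPow A 1).PosSemidef := by rwa [hadPow_one]
  have hA2 : (hadPow A 2).PosSemidef := hadPow_two (A := A) ▸ hA.hadamard hA
  rw [hadPow_mulVec_eq_zero_of_supportedOnStar hA hstar
    ((hA1.dotProduct_mulVec_self_eq_zero_iff β).mp h1)
    ((hA2.dotProduct_mulVec_self_eq_zero_iff β).mp h2) hm, dotProduct_zero]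

end star

theorem stmt18_general (n : ℕ) (G : SimpleGraph (Fin n)) (c : Fin n)
    (hstar : ∀ i j : Fin n, G.Adj i j ↔ (i = c ∧ j ≠ c) ∨ (j = c ∧ i ≠ c))
    (A : Matrix (Fin n) (Fin n) ℝ) (hA : A.PosSemidef)
    (hsparse : ∀ i j : Fin n, i ≠ j → ¬ G.Adj i j → A i j = 0) :
    (∀ k : ℕ, 2 < k → Nset A k = ∅) ∧
    ({β : Fin n → ℝ | β ⬝ᵥ (hadPow A 1).mulVec β = 0} ∩
        {β : Fin n → ℝ | β ⬝ᵥ (hadPow A 2).mulVec β = 0} =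
      ⋂ (m : ℕ) (_ : 1 ≤ m), {β : Fin n → ℝ | β ⬝ᵥ (hadPow A m).mulVec β = 0}) := by
  have hstarA : SupportedOnStar A c := fun i j hij hic hjc =>
    hsparse i j hij (by simp [hstar, hic, hjc])
  refine ⟨fun k hk => Set.eq_empty_iff_forall_notMem.mpr fun β ⟨hzero, hpos⟩ => ?_, ?_⟩
  · rw [dotProduct_hadPow_mulVec_eq_zero_of_supportedOnStar hA hstarA (hzero 1 (by omega))
      (hzero 2 hk) (by omega)] at hpos
    exact lt_irrefl 0 hpos
  · ext β
    simp only [Set.mem_inter_iff, Set.mem_ofPred_eq, Set.mem_iInter]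
    exact ⟨fun ⟨h1, h2⟩ m hm =>
      dotProduct_hadPow_mulVec_eq_zero_of_supportedOnStar hA hstarA h1 h2 (by omega),
      fun h => ⟨h 1 le_rfl, h 2 one_le_two⟩⟩

theorem stmt18 (n : ℕ) (hn : 2 ≤ n) (G : SimpleGraph (Fin n)) (c : Fin n)
    (hstar : ∀ i j : Fin n, G.Adj i j ↔ (i = c ∧ j ≠ c) ∨ (j = c ∧ i ≠ c))
    (A : Matrix (Fin n) (Fin n) ℝ) (hA : A.PosSemidef)
    (hsparse : ∀ i j : Fin n, i ≠ j → ¬ G.Adj i j → A i j = 0) :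
    (∀ k : ℕ, 2 < k → Nset A k = ∅) ∧
    ({β : Fin n → ℝ | β ⬝ᵥ (hadPow A 1).mulVec β = 0} ∩
        {β : Fin n → ℝ | β ⬝ᵥ (hadPow A 2).mulVec β = 0} =
      ⋂ (m : ℕ) (_ : 1 ≤ m), {β : Fin n → ℝ | β ⬝ᵥ (hadPow A m).mulVec β = 0}) :=
  stmt18_general n G c hstar A hA hsparse
end
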